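/- arXiv:2004.10219 — 4 statements merged into one kernel-verified Lean document; each statement's English description precedes it below -/
import Mathlib

section
/- Let X be a uniformly smooth Banach space and let S be a nonempty bounded subset of X. For every a in the convex hull of S there exists a sequence {x_i}_{i=1}^∞ ⊆ S such that, setting a_k = (1/k)·∑_{i=1}^k x_i, for every k ≥ 1 and every t > 0 with ρ_X(t) ≤ 1/k one has ‖a − a_k‖ ≤ (2·exp(2)/(k·t))·diam(S) (equivalently, ‖a − a_k‖ ≤ 2·exp(2)·diam(S)/(k·ρ_X^{-1}(1/k))). -/
/-- The modulus of smoothness of a real normed space `X`: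
`ρ_X(t) = sup{(‖x+ty‖+‖x−ty‖)/2 − 1 : ‖x‖ ≤ 1, ‖y‖ ≤ 1}`. -/
noncomputable def modulusOfSmoothness (X : Type*) [NormedAddCommGroup X]
    [NormedSpace ℝ X] (t : ℝ) : ℝ :=
  sSup {r | ∃ x y : X, ‖x‖ ≤ 1 ∧ ‖y‖ ≤ 1 ∧ r = (‖x + t • y‖ + ‖x - t • y‖) / 2 - 1}

section Aux

variable {X : Type*} [NormedAddCommGroup X] [NormedSpace ℝ X]

lemma mos_set_nonempty (t : ℝ) :
    Set.Nonempty {r : ℝ | ∃ x y : X, ‖x‖ ≤ 1 ∧ ‖y‖ ≤ 1 ∧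
      r = (‖x + t • y‖ + ‖x - t • y‖) / 2 - 1} :=
  ⟨-1, 0, 0, by simp, by simp, by simp⟩

lemma mos_bddAbove (t : ℝ) :
    BddAbove {r : ℝ | ∃ x y : X, ‖x‖ ≤ 1 ∧ ‖y‖ ≤ 1 ∧
      r = (‖x + t • y‖ + ‖x - t • y‖) / 2 - 1} := by
  refine ⟨|t|, ?_⟩
  rintro r ⟨x, y, hx, hy, rfl⟩
  have h1 : ‖x + t • y‖ ≤ 1 + |t| := by
    calc ‖x + t • y‖ ≤ ‖x‖ + ‖t • y‖ := norm_add_le _ _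
      _ ≤ 1 + |t| := by
        rw [norm_smul, Real.norm_eq_abs]
        nlinarith [abs_nonneg t, norm_nonneg y]
  have h2 : ‖x - t • y‖ ≤ 1 + |t| := by
    calc ‖x - t • y‖ ≤ ‖x‖ + ‖t • y‖ := norm_sub_le _ _
      _ ≤ 1 + |t| := by
        rw [norm_smul, Real.norm_eq_abs]
        nlinarith [abs_nonneg t, norm_nonneg y]
  linarith

lemma mos_ge (t : ℝ) {x y : X} (hx : ‖x‖ ≤ 1) (hy : ‖y‖ ≤ 1) :
    (‖x + t • y‖ + ‖x - t • y‖) / 2 - 1 ≤ modulusOfSmoothness X t :=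
  le_csSup (mos_bddAbove t) ⟨x, y, hx, hy, rfl⟩

lemma mos_nonneg [Nontrivial X] (t : ℝ) : 0 ≤ modulusOfSmoothness X t := by
  obtain ⟨u, hu⟩ := exists_ne (0 : X)
  obtain ⟨x, hx⟩ : ∃ x : X, ‖x‖ = 1 := ⟨‖u‖⁻¹ • u, norm_smul_inv_norm hu⟩
  have := mos_ge (X := X) t (x := x) (y := 0) (le_of_eq hx) (by simp)
  simp only [smul_zero, add_zero, sub_zero, hx] at this
  linarith

lemma mos_ge_sub_one [Nontrivial X] {t : ℝ} (ht : 0 ≤ t) :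
    t - 1 ≤ modulusOfSmoothness X t := by
  obtain ⟨u, hu⟩ := exists_ne (0 : X)
  obtain ⟨x, hx⟩ : ∃ x : X, ‖x‖ = 1 := ⟨‖u‖⁻¹ • u, norm_smul_inv_norm hu⟩
  have h1 : x + t • x = (1 + t) • x := by module
  have h2 : x - t • x = (1 - t) • x := by module
  have hmem := mos_ge (X := X) t (x := x) (y := x) (le_of_eq hx) (le_of_eq hx)
  rw [h1, h2, norm_smul, norm_smul, Real.norm_eq_abs, Real.norm_eq_abs, hx,
    mul_one, mul_one] at hmem
  have ha1 : |1 + t| = 1 + t := abs_of_nonneg (by linarith)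
  have ha2 : t - 1 ≤ |1 - t| := by
    rcases abs_cases (1 - t) with ⟨h, _⟩ | ⟨h, _⟩ <;> linarith
  rw [ha1] at hmem
  nlinarith

lemma mos_scale [Nontrivial X] {s t : ℝ} (hs : 0 ≤ s) (hst : s ≤ t) (ht : 0 < t) :
    modulusOfSmoothness X s ≤ s / t * modulusOfSmoothness X t := by
  apply csSup_le (mos_set_nonempty s)
  rintro r ⟨x, y, hx, hy, rfl⟩
  set θ := s / t with hθdef
  have hθ0 : 0 ≤ θ := div_nonneg hs ht.le
  have hθ1 : θ ≤ 1 := by rw [hθdef, div_le_one ht]; exact hst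
  have hts : θ * t = s := div_mul_cancel₀ s ht.ne'
  have key1 : x + s • y = (1 - θ) • x + θ • (x + t • y) := by
    rw [← hts]; module
  have key2 : x - s • y = (1 - θ) • x + θ • (x - t • y) := by
    rw [← hts]; module
  have h1 : ‖x + s • y‖ ≤ (1 - θ) * ‖x‖ + θ * ‖x + t • y‖ := by
    rw [key1]
    calc ‖(1 - θ) • x + θ • (x + t • y)‖ ≤ ‖(1 - θ) • x‖ + ‖θ • (x + t • y)‖ :=
        norm_add_le _ _
      _ = (1 - θ) * ‖x‖ + θ * ‖x + t • y‖ := by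
        rw [norm_smul, norm_smul, Real.norm_eq_abs, Real.norm_eq_abs,
          abs_of_nonneg (by linarith), abs_of_nonneg hθ0]
  have h2 : ‖x - s • y‖ ≤ (1 - θ) * ‖x‖ + θ * ‖x - t • y‖ := by
    rw [key2]
    calc ‖(1 - θ) • x + θ • (x - t • y)‖ ≤ ‖(1 - θ) • x‖ + ‖θ • (x - t • y)‖ :=
        norm_add_le _ _
      _ = (1 - θ) * ‖x‖ + θ * ‖x - t • y‖ := by
        rw [norm_smul, norm_smul, Real.norm_eq_abs, Real.norm_eq_abs,
          abs_of_nonneg (by linarith), abs_of_nonneg hθ0]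
  have hgen : (‖x + t • y‖ + ‖x - t • y‖) / 2 - 1 ≤ modulusOfSmoothness X t :=
    mos_ge t hx hy
  nlinarith [mul_le_mul_of_nonneg_left hgen hθ0]

/-- Key smoothness inequality: `‖u+v‖ + ‖u-v‖ ≤ 2‖u‖(1 + ρ(‖v‖/‖u‖))`. -/
lemma mos_key [Nontrivial X] (u v : X) (hu : u ≠ 0) :
    ‖u + v‖ + ‖u - v‖ ≤ 2 * ‖u‖ * (1 + modulusOfSmoothness X (‖v‖ / ‖u‖)) := by
  have hu0 : 0 < ‖u‖ := norm_pos_iff.2 hu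
  by_cases hv : v = 0
  · subst hv
    simp only [add_zero, sub_zero, norm_zero, zero_div]
    nlinarith [mos_nonneg (X := X) 0]
  · have hv0 : 0 < ‖v‖ := norm_pos_iff.2 hv
    set x : X := ‖u‖⁻¹ • u with hxdef
    set y : X := ‖v‖⁻¹ • v with hydef
    set t₀ : ℝ := ‖v‖ / ‖u‖ with ht₀def
    have hx : ‖x‖ = 1 := norm_smul_inv_norm hu
    have hy : ‖y‖ = 1 := norm_smul_inv_norm hv
    have hty : t₀ • y = ‖u‖⁻¹ • v := by
      rw [hydef, smul_smul]
      congr 1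
      rw [ht₀def]
      field_simp
    have hxy1 : x + t₀ • y = ‖u‖⁻¹ • (u + v) := by
      rw [hxdef, hty, smul_add]
    have hxy2 : x - t₀ • y = ‖u‖⁻¹ • (u - v) := by
      rw [hxdef, hty, smul_sub]
    have hn1 : ‖x + t₀ • y‖ = ‖u + v‖ / ‖u‖ := by
      rw [hxy1, norm_smul, Real.norm_eq_abs, abs_of_nonneg (inv_nonneg.2 hu0.le),
        inv_mul_eq_div]
    have hn2 : ‖x - t₀ • y‖ = ‖u - v‖ / ‖u‖ := by
      rw [hxy2, norm_smul, Real.norm_eq_abs, abs_of_nonneg (inv_nonneg.2 hu0.le),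
        inv_mul_eq_div]
    have hgen : (‖x + t₀ • y‖ + ‖x - t₀ • y‖) / 2 - 1 ≤ modulusOfSmoothness X t₀ :=
      mos_ge t₀ (le_of_eq hx) (le_of_eq hy)
    rw [hn1, hn2] at hgen
    have := mul_le_mul_of_nonneg_left hgen hu0.le
    rw [← add_div] at this
    have hdd : ‖u‖ * ((‖u + v‖ + ‖u - v‖) / ‖u‖ / 2 - 1)
        = (‖u + v‖ + ‖u - v‖) / 2 - ‖u‖ := by
      field_simp
    rw [hdd] at this
    linarith

end Aux

set_option maxHeartbeats 1000000 in
/-- **Approximate Carathéodory theorem** (Ivanov) for uniformly smooth Banach spaces. -/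
theorem approx_caratheodory_uniformly_smooth
    (X : Type*) [NormedAddCommGroup X] [NormedSpace ℝ X] [CompleteSpace X]
    (hsmooth : Filter.Tendsto (fun t => modulusOfSmoothness X t / t)
      (nhdsWithin 0 (Set.Ioi 0)) (nhds 0))
    (S : Set X) (hS : S.Nonempty) (hbdd : Bornology.IsBounded S)
    (a : X) (ha : a ∈ convexHull ℝ S) :
    ∃ x : ℕ → X, (∀ i, x i ∈ S) ∧
      ∀ k : ℕ, 1 ≤ k → ∀ t : ℝ, 0 < t → modulusOfSmoothness X t ≤ 1 / k →
        ‖a - (k : ℝ)⁻¹ • ∑ i ∈ Finset.range k, x i‖ ≤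
          2 * Real.exp 2 / (k * t) * Metric.diam S := by
  clear hsmooth
  rcases subsingleton_or_nontrivial X with hX | hX
  · refine ⟨fun _ => hS.choose, fun _ => hS.choose_spec, ?_⟩
    intro k hk t ht hρ
    have h0 : a - (k : ℝ)⁻¹ • ∑ i ∈ Finset.range k, hS.choose = 0 := Subsingleton.elim _ _
    rw [h0, norm_zero]
    have hkt : (0:ℝ) ≤ (k : ℝ) * t := by positivity
    exact mul_nonneg (div_nonneg (by positivity) hkt) Metric.diam_nonneg
  · set D := Metric.diam S with hDdef
    have hDnn : 0 ≤ D := Metric.diam_nonneg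
    have hdist : ∀ s ∈ S, ‖s - a‖ ≤ D := by
      intro s hs
      have h1 : dist s a ≤ Metric.diam (convexHull ℝ S) :=
        Metric.dist_le_diam_of_mem (isBounded_convexHull.2 hbdd)
          (subset_convexHull ℝ S hs) ha
      rw [convexHull_diam, dist_eq_norm] at h1
      exact h1
    -- greedy choice function
    have hchoice : ∀ u : X, ∃ s, s ∈ S ∧ (u ≠ 0 →
        ‖u + (s - a)‖ ≤ ‖u‖ + 2 * ‖u‖ * modulusOfSmoothness X (‖s - a‖ / ‖u‖)) := by
      intro u
      by_cases hu : u = 0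
      · exact ⟨hS.choose, hS.choose_spec, fun h => absurd hu h⟩
      · obtain ⟨f, hf1, hfu⟩ := exists_dual_vector ℝ u (norm_ne_zero_iff.2 hu)
        have hsex : ∃ s ∈ S, f s ≤ f a := by
          by_contra hcon
          push_neg at hcon
          have hC : Convex ℝ {w : X | f a < f w} :=
            convex_halfSpace_gt ⟨map_add f, map_smul f⟩ _
          have h := convexHull_min (fun s hs => hcon s hs) hC ha
          exact (lt_irrefl (f a)) h
        obtain ⟨s, hsS, hsf⟩ := hsex
        refine ⟨s, hsS, fun _ => ?_⟩
        have hfu' : f u = ‖u‖ := by exact_mod_cast hfu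
        have hkey := mos_key u (s - a) hu
        have hlow : ‖u‖ - (f s - f a) ≤ ‖u - (s - a)‖ := by
          have h1 := f.le_opNorm (u - (s - a))
          rw [hf1, one_mul, Real.norm_eq_abs] at h1
          have h2 : f (u - (s - a)) = ‖u‖ - (f s - f a) := by
            rw [map_sub, map_sub, hfu']
          have h3 := le_abs_self (f (u - (s - a)))
          rw [h2] at h1 h3
          linarith
        nlinarith [norm_nonneg u]
    choose g hgS hgb using hchoice
    -- the greedy sequence of partial error vectors
    obtain ⟨e, he0, hestep⟩ : ∃ e : ℕ → X, e 0 = 0 ∧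
        ∀ j, e (j + 1) = e j + (g (e j) - a) :=
      ⟨fun k => Nat.rec (0 : X) (fun _ ek => ek + (g ek - a)) k, rfl, fun _ => rfl⟩
    refine ⟨fun i => g (e i), fun i => hgS _, ?_⟩
    intro k hk t ht hρt
    have hkpos : (0:ℝ) < k := by exact_mod_cast hk
    have hk0 : (k:ℝ) ≠ 0 := hkpos.ne'
    have h1k : 1 / (k:ℝ) ≤ 1 := by
      rw [div_le_one hkpos]; exact_mod_cast hk
    have ht2 : t ≤ 2 := by
      have := mos_ge_sub_one (X := X) ht.le
      linarith
    -- partial sums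
    have hsum : ∀ m : ℕ, ∑ i ∈ Finset.range m, g (e i) = e m + (m : ℕ) • a := by
      intro m
      induction m with
      | zero => simp [he0]
      | succ m ih =>
        rw [Finset.sum_range_succ, ih, hestep, succ_nsmul]
        abel
    -- main induction
    have main : ∀ j, j ≤ k → ‖e j‖ ≤ (1 + t) * D / t + j * (2 * D / (t * k)) := by
      intro j
      induction j with
      | zero =>
        intro _
        rw [he0, norm_zero]
        push_cast
        positivity
      | succ j ih =>
        intro hjk
        have hj : j ≤ k := Nat.le_of_succ_le hjk
        have ihj := ih hj
        have hv : ‖g (e j) - a‖ ≤ D := hdist _ (hgS _)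
        have hvnn : 0 ≤ ‖g (e j) - a‖ := norm_nonneg _
        by_cases hcase : ‖e j‖ < D / t
        · have h1 : ‖e (j + 1)‖ ≤ ‖e j‖ + ‖g (e j) - a‖ := by
            rw [hestep]; exact norm_add_le _ _
          have h2 : D / t + D = (1 + t) * D / t := by
            field_simp
          have h3 : (0:ℝ) ≤ (j + 1 : ℝ) * (2 * D / (t * k)) := by positivity
          have h4 : (0:ℝ) ≤ (j : ℝ) * (2 * D / (t * k)) := by positivity
          have h5 : (0:ℝ) ≤ (1 + t) * D / t := by positivity
          push_cast
          nlinarith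
        · push_neg at hcase
          have hDle : D ≤ ‖e j‖ * t := (div_le_iff₀ ht).1 hcase
          by_cases he' : e j = 0
          · have hD0 : D = 0 := by
              rw [he', norm_zero, zero_mul] at hDle
              linarith
            have h1 : ‖e (j + 1)‖ ≤ ‖e j‖ + ‖g (e j) - a‖ := by
              rw [hestep]; exact norm_add_le _ _
            have hv0 : ‖g (e j) - a‖ = 0 := le_antisymm (hD0 ▸ hv) hvnn
            have hring : (j : ℝ) * (2 * D / (t * k)) + 2 * D / (t * k)
                = ((j : ℝ) + 1) * (2 * D / (t * k)) := by ring
            have hQ : (0:ℝ) ≤ 2 * D / (t * k) := by positivity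
            push_cast
            linarith
          · have hu0 : 0 < ‖e j‖ := norm_pos_iff.2 he'
            have hb := hgb (e j) he'
            set s₀ : ℝ := ‖g (e j) - a‖ / ‖e j‖ with hs₀def
            have hs₀0 : 0 ≤ s₀ := div_nonneg hvnn hu0.le
            have hs₀t : s₀ ≤ t := by
              rw [hs₀def, div_le_iff₀ hu0]
              calc ‖g (e j) - a‖ ≤ D := hv
                _ ≤ ‖e j‖ * t := hDle
                _ = t * ‖e j‖ := mul_comm _ _
            have hρs : modulusOfSmoothness X s₀ ≤ s₀ / t * (1 / k) := by
              calc modulusOfSmoothness X s₀ ≤ s₀ / t * modulusOfSmoothness X t :=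
                  mos_scale hs₀0 hs₀t ht
                _ ≤ s₀ / t * (1 / k) :=
                  mul_le_mul_of_nonneg_left hρt (div_nonneg hs₀0 ht.le)
            have hs₀mul : s₀ * ‖e j‖ = ‖g (e j) - a‖ := div_mul_cancel₀ _ hu0.ne'
            have hstep2 : ‖e (j + 1)‖ ≤ ‖e j‖ + 2 * D / (t * k) := by
              rw [hestep]
              have h1 : ‖e j + (g (e j) - a)‖ ≤
                  ‖e j‖ + 2 * ‖e j‖ * modulusOfSmoothness X s₀ := hb
              have h2 : 2 * ‖e j‖ * modulusOfSmoothness X s₀ ≤ 2 * D / (t * k) := by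
                calc 2 * ‖e j‖ * modulusOfSmoothness X s₀
                    ≤ 2 * ‖e j‖ * (s₀ / t * (1 / k)) := by
                      apply mul_le_mul_of_nonneg_left hρs (by positivity)
                  _ = 2 * (s₀ * ‖e j‖) / (t * k) := by field_simp
                  _ = 2 * ‖g (e j) - a‖ / (t * k) := by rw [hs₀mul]
                  _ ≤ 2 * D / (t * k) := by
                      rw [div_le_div_iff₀ (by positivity) (by positivity)]
                      nlinarith [mul_pos ht hkpos]
              linarith
            have hring : (j : ℝ) * (2 * D / (t * k)) + 2 * D / (t * k)
                = ((j : ℝ) + 1) * (2 * D / (t * k)) := by ring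
            push_cast
            linarith
    have hek := main k le_rfl
    have hksimp : (k : ℝ) * (2 * D / (t * k)) = 2 * D / t := by
      field_simp
    have hek' : ‖e k‖ ≤ (3 + t) * D / t := by
      have : (1 + t) * D / t + 2 * D / t = (3 + t) * D / t := by
        field_simp; ring
      rw [hksimp] at hek
      linarith
    -- rewrite the goal
    have hsa : a - (k : ℝ)⁻¹ • ∑ i ∈ Finset.range k, g (e i) = -((k : ℝ)⁻¹ • e k) := by
      rw [hsum k, smul_add, ← Nat.cast_smul_eq_nsmul ℝ, smul_smul,
        inv_mul_cancel₀ hk0, one_smul]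
      abel
    rw [hsa, norm_neg, norm_smul, Real.norm_eq_abs,
      abs_of_nonneg (inv_nonneg.2 hkpos.le)]
    have hexp : (3:ℝ) ≤ Real.exp 2 := by
      nlinarith [Real.add_one_le_exp (2:ℝ)]
    have hfin : (3 + t) * D / t ≤ 2 * Real.exp 2 * D / t := by
      rw [div_le_div_iff₀ ht ht]
      have hkey : 0 ≤ (2 * Real.exp 2 - (3 + t)) * (D * t) :=
        mul_nonneg (by linarith) (mul_nonneg hDnn ht.le)
      nlinarith [hkey]
    calc (k:ℝ)⁻¹ * ‖e k‖ ≤ (k:ℝ)⁻¹ * (2 * Real.exp 2 * D / t) := by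
          refine mul_le_mul_of_nonneg_left ?_ (inv_nonneg.2 hkpos.le)
          linarith
      _ = 2 * Real.exp 2 / ((k:ℝ) * t) * D := by
          field_simp
end

section
/- Equip M_d(ℂ) with the entrywise ℓ_p-norm ‖A‖_{ℓ_p} = (∑_{i,j=1}^d |A_{ij}|^p)^{1/p}. Let S ⊆ M_d(ℂ) be nonempty and bounded and A ∈ conv(S). If 1 < p ≤ 2, there exists a sequence {X_i}_{i=1}^∞ ⊆ S such that for all k ≥ 1, A_k = (1/k)·∑_{i=1}^k X_i satisfies ‖A − A_k‖_{ℓ_p} ≤ (2·exp(2)/p^{1/p}) · k^{1/p−1} · diam(S). If 2 ≤ p < ∞, such a sequence exists with ‖A − A_k‖_{ℓ_p} ≤ exp(2) · √(2(p−1)/k) · diam(S) for all k ≥ 1. -/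
/-- The entrywise `ℓ_p`-norm on complex matrices. -/
noncomputable def lpNorm {d : ℕ} (p : ℝ) (A : Matrix (Fin d) (Fin d) ℂ) : ℝ :=
  (∑ i, ∑ j, ‖A i j‖ ^ p) ^ (1 / p)

/-- The diameter of a set of matrices with respect to the entrywise `ℓ_p`-norm. -/
noncomputable def lpDiam {d : ℕ} (p : ℝ) (S : Set (Matrix (Fin d) (Fin d) ℂ)) : ℝ :=
  sSup {r | ∃ X ∈ S, ∃ Y ∈ S, r = lpNorm p (X - Y)}

namespace AC
open Real Finset

/-- Convex tangent line inequality: for `q ≥ 1`, `v^q + q v^{q-1}(u-v) ≤ u^q`. -/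
lemma tangent_le {q u v : ℝ} (hq : 1 ≤ q) (hu : 0 ≤ u) (hv : 0 < v) :
    v ^ q + q * v ^ (q - 1) * (u - v) ≤ u ^ q := by
  have hs : -1 ≤ u / v - 1 := by
    have : 0 ≤ u / v := div_nonneg hu hv.le
    linarith
  have h := one_add_mul_self_le_rpow_one_add hs hq
  have h1 : 1 + (u / v - 1) = u / v := by ring
  rw [h1] at h
  have h2 : v ^ q * (1 + q * (u / v - 1)) ≤ v ^ q * (u / v) ^ q :=
    mul_le_mul_of_nonneg_left h (Real.rpow_nonneg hv.le q)
  have e1 : v ^ q * (u / v) ^ q = u ^ q := by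
    rw [Real.div_rpow hu hv.le]
    field_simp
  have e2 : v ^ (q - 1) = v ^ q / v := by
    rw [Real.rpow_sub hv, Real.rpow_one]
  rw [e1] at h2
  rw [e2]
  have : v ^ q + q * (v ^ q / v) * (u - v) = v ^ q * (1 + q * (u / v - 1)) := by
    field_simp
  linarith [this ▸ h2]

/-- Concave tangent line inequality: for `0 ≤ q ≤ 1`, `u^q ≤ v^q + q v^{q-1}(u-v)`. -/
lemma tangent_ge {q u v : ℝ} (hq0 : 0 ≤ q) (hq : q ≤ 1) (hu : 0 ≤ u) (hv : 0 < v) :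
    u ^ q ≤ v ^ q + q * v ^ (q - 1) * (u - v) := by
  have hs : -1 ≤ u / v - 1 := by
    have : 0 ≤ u / v := div_nonneg hu hv.le
    linarith
  have h := rpow_one_add_le_one_add_mul_self hs hq0 hq
  have h1 : 1 + (u / v - 1) = u / v := by ring
  rw [h1] at h
  have h2 : v ^ q * (u / v) ^ q ≤ v ^ q * (1 + q * (u / v - 1)) :=
    mul_le_mul_of_nonneg_left h (Real.rpow_nonneg hv.le q)
  have e1 : v ^ q * (u / v) ^ q = u ^ q := by
    rw [Real.div_rpow hu hv.le]
    field_simp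
  have e2 : v ^ (q - 1) = v ^ q / v := by
    rw [Real.rpow_sub hv, Real.rpow_one]
  rw [e1] at h2
  rw [e2]
  have : v ^ q + q * (v ^ q / v) * (u - v) = v ^ q * (1 + q * (u / v - 1)) := by
    field_simp
  linarith [this ▸ h2]

/-- `(x²)^(c/2) = x^c` for `x ≥ 0`. -/
lemma sq_rpow_half {x : ℝ} (hx : 0 ≤ x) (c : ℝ) : ((x ^ 2 : ℝ)) ^ (c / 2) = x ^ c := by
  rw [← Real.rpow_natCast x 2, ← Real.rpow_mul hx]
  push_cast
  ring_nf

lemma rpow_two_eq_sq {x : ℝ} (hx : 0 ≤ x) : x ^ (2 : ℝ) = x ^ 2 := by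
  rw [← Real.rpow_natCast x 2]
  norm_num

lemma abs_sq_expand (a b : ℂ) :
    ‖a + b‖ ^ 2
      = ‖a‖ ^ 2 + 2 * ((starRingEnd ℂ) a * b).re + ‖b‖ ^ 2 := by
  have h1 : ((starRingEnd ℂ) a * b).re = (a * (starRingEnd ℂ) b).re := by
    rw [← Complex.conj_re (a * (starRingEnd ℂ) b)]
    simp [map_mul]
  rw [h1]
  simp only [Complex.sq_norm, Complex.normSq_add]
  ring

lemma ptA {p : ℝ} (hp1 : 1 ≤ p) (hp2 : p ≤ 2) (a b : ℂ) :
    ‖a + b‖ ^ p ≤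
      ‖a‖ ^ p + p * (‖a‖ ^ (p - 2) * ((starRingEnd ℂ) a * b).re)
        + 6 * ‖b‖ ^ p := by
  have hp0 : (0:ℝ) < p := lt_of_lt_of_le one_pos hp1
  set r := ‖a‖ with hr
  set s := ‖a + b‖ with hs
  set t := ‖b‖ with ht
  set R := ((starRingEnd ℂ) a * b).re with hR
  have hr0 : 0 ≤ r := norm_nonneg a
  have hs0 : 0 ≤ s := norm_nonneg _
  have ht0 : 0 ≤ t := norm_nonneg b
  have hid : s ^ 2 = r ^ 2 + 2 * R + t ^ 2 := abs_sq_expand a b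
  have hRle : |R| ≤ r * t := by
    calc |R| ≤ ‖(starRingEnd ℂ) a * b‖ := Complex.abs_re_le_norm _
    _ = r * t := by rw [norm_mul, Complex.norm_conj]
  have hst : s ≤ r + t := norm_add_le a b
  by_cases hb : b = 0
  · have hteq : t = 0 := by rw [ht, hb, norm_zero]
    have hReq : R = 0 := by rw [hR, hb, mul_zero, Complex.zero_re]
    have hseq : s = r := by rw [hs, hb, add_zero]
    rw [hteq, hReq, hseq, Real.zero_rpow hp0.ne']
    simp
  · have htpos : 0 < t := norm_pos_iff.mpr hb
    by_cases hcase : t ≤ r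
    · have hrpos : 0 < r := lt_of_lt_of_le htpos hcase
      have hv : (0:ℝ) < r ^ 2 := by positivity
      have h := tangent_ge (by linarith : (0:ℝ) ≤ p/2) (by linarith : p/2 ≤ 1)
        (sq_nonneg s) hv
      rw [sq_rpow_half hs0 p, sq_rpow_half hr0 p] at h
      have e3 : ((r^2:ℝ)) ^ (p/2 - 1) = r ^ (p - 2) := by
        rw [show p/2 - 1 = (p-2)/2 by ring, sq_rpow_half hr0]
      rw [e3] at h
      have e4 : s^2 - r^2 = 2*R + t^2 := by linarith [hid]
      rw [e4] at h
      -- bound the quadratic error term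
      have hmono : r ^ (p-2) ≤ t ^ (p-2) := rpow_le_rpow_of_nonpos htpos hcase (by linarith)
      have htp : t ^ (p-2) * t^2 = t ^ p := by
        rw [← rpow_two_eq_sq ht0, ← Real.rpow_add htpos]
        norm_num
      have hb1 : r ^ (p-2) * t^2 ≤ t ^ p := by
        rw [← htp]
        exact mul_le_mul_of_nonneg_right hmono (sq_nonneg t)
      have htpn : (0:ℝ) ≤ t ^ p := Real.rpow_nonneg ht0 p
      nlinarith [h, hb1, htpn]
    · push_neg at hcase
      have h1 : s ^ p ≤ (2*t) ^ p := Real.rpow_le_rpow hs0 (by linarith) hp0.le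
      have h2 : (2*t)^p = 2^p * t^p := Real.mul_rpow (by norm_num) ht0
      have htpn : (0:ℝ) ≤ t ^ p := Real.rpow_nonneg ht0 p
      have h3 : (2:ℝ)^p ≤ 4 := by
        calc (2:ℝ)^p ≤ (2:ℝ)^(2:ℝ) := rpow_le_rpow_of_exponent_le one_le_two hp2
        _ = 4 := by rw [rpow_two_eq_sq (by norm_num)]; norm_num
      have h4 : r ^ (p-2) * (-R) ≤ t ^ p := by
        have hnR : -R ≤ r * t := by
          have := neg_abs_le R
          linarith [hRle]
        rcases eq_or_lt_of_le hr0 with hre | hrpos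
        · calc r^(p-2)*(-R) ≤ r^(p-2)*(r*t) :=
                mul_le_mul_of_nonneg_left hnR (Real.rpow_nonneg hr0 _)
          _ = 0 := by rw [← hre]; ring
          _ ≤ t ^ p := htpn
        · have e5 : r^(p-2) * (r*t) = r^(p-1) * t := by
            rw [show p - 1 = (p-2) + 1 by ring, Real.rpow_add hrpos, Real.rpow_one]
            ring
          have e6 : r^(p-1) ≤ t^(p-1) := Real.rpow_le_rpow hr0 hcase.le (by linarith)
          have e7 : t^(p-1) * t = t^p := by
            nth_rewrite 2 [show p = (p-1) + 1 by ring]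
            rw [Real.rpow_add htpos, Real.rpow_one]
          calc r^(p-2)*(-R) ≤ r^(p-2)*(r*t) :=
                mul_le_mul_of_nonneg_left hnR (Real.rpow_nonneg hr0 _)
          _ = r^(p-1) * t := e5
          _ ≤ t^(p-1) * t := mul_le_mul_of_nonneg_right e6 ht0
          _ = t^p := e7
      have hrpn : (0:ℝ) ≤ r ^ p := Real.rpow_nonneg hr0 p
      nlinarith [h1, h2, h3, h4, htpn, hrpn]

lemma diff_rpow_le_concave {q' m u v : ℝ} (hq0 : 0 < q') (hq1 : q' ≤ 1)
    (hm : 0 < m) (hmv : m ≤ v) (hvu : v ≤ u) :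
    u ^ q' - v ^ q' ≤ q' * m ^ (q' - 1) * (u - v) := by
  have hv : 0 < v := lt_of_lt_of_le hm hmv
  have h := tangent_ge hq0.le hq1 (le_trans hv.le hvu : (0:ℝ) ≤ u) hv
  have hmono : v ^ (q' - 1) ≤ m ^ (q' - 1) :=
    rpow_le_rpow_of_nonpos hm hmv (by linarith)
  nlinarith [h, mul_le_mul_of_nonneg_right
    (mul_le_mul_of_nonneg_left hmono hq0.le) (by linarith : (0:ℝ) ≤ u - v)]

lemma diff_rpow_le_convex {q' M u v : ℝ} (hq1 : 1 ≤ q')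
    (hv : 0 ≤ v) (hvu : v ≤ u) (hu : 0 < u) (huM : u ≤ M) :
    u ^ q' - v ^ q' ≤ q' * M ^ (q' - 1) * (u - v) := by
  have h := tangent_le hq1 hv hu
  have hmono : u ^ (q' - 1) ≤ M ^ (q' - 1) :=
    Real.rpow_le_rpow hu.le huM (by linarith)
  nlinarith [h, mul_le_mul_of_nonneg_right
    (mul_le_mul_of_nonneg_left hmono (by linarith : (0:ℝ) ≤ q')) (by linarith : (0:ℝ) ≤ u - v)]

lemma coefB {p : ℝ} (hp0 : 0 < p) : 25*((p/2)*(p/2-1)) + p/2 ≤ 7*p^2 := by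
  nlinarith [sq_nonneg p, hp0]

set_option maxHeartbeats 1000000 in
lemma ptB_scalar {p r s t R : ℝ} (hp : 2 ≤ p)
    (hr0 : 0 ≤ r) (hs0 : 0 ≤ s) (ht0 : 0 ≤ t)
    (hid : s ^ 2 = r ^ 2 + 2 * R + t ^ 2)
    (hRle : |R| ≤ r * t)
    (hst : s ≤ r + t) (hsr0 : r ≤ s + t) :
    s ^ p ≤ r ^ p + p * (r ^ (p - 2) * R)
        + 7 * p^2 * (r ^ (p - 2) * t ^ 2)
        + 2 * (p+1)^p * t ^ p := by
  have hp0 : (0:ℝ) < p := by linarith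
  rcases eq_or_lt_of_le hp with hp2 | hp2
  · -- p = 2
    subst hp2
    rw [show (2:ℝ) - 2 = 0 by norm_num, Real.rpow_zero,
      rpow_two_eq_sq hs0, rpow_two_eq_sq hr0, rpow_two_eq_sq ht0,
      rpow_two_eq_sq (by norm_num : (0:ℝ) ≤ 2+1)]
    nlinarith [hid, sq_nonneg t]
  rcases eq_or_lt_of_le ht0 with hteq | htpos
  · have ht' : t = 0 := hteq.symm
    have hReq : R = 0 := by
      have h1 : |R| ≤ 0 := by rw [ht', mul_zero] at hRle; simpa using hRle
      exact abs_eq_zero.mp (le_antisymm h1 (abs_nonneg R))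
    have hseq : s = r := le_antisymm (by linarith [hst]) (by linarith [hsr0])
    rw [ht', hReq, hseq, Real.zero_rpow hp0.ne']
    norm_num
  have hrpnn : (0:ℝ) ≤ r ^ (p-2) := Real.rpow_nonneg hr0 _
  have htpnn : (0:ℝ) ≤ t ^ p := Real.rpow_nonneg ht0 _
  by_cases hcase : p * t ≤ r
  · -- |b| small compared to |a|: second order estimate
    have hptpos : 0 < p * t := by positivity
    have hrpos : 0 < r := lt_of_lt_of_le hptpos hcase
    have htr : t ≤ r / 2 := by nlinarith
    have hslb : r / 2 ≤ s := by linarith [hsr0]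
    have hspos : 0 < s := by linarith
    have htp' : t ≤ r / p := by rw [le_div_iff₀ hp0]; linarith [hcase]
    have hub : (s:ℝ)^2 ≤ ((1 + 1/p) * r)^2 := by
      have h1 : s ≤ (1 + 1/p) * r := by
        have h2 : r / p = (1/p) * r := by ring
        calc s ≤ r + t := hst
        _ ≤ r + r/p := by linarith
        _ = (1 + 1/p) * r := by ring
      nlinarith [hs0, h1]
    have hlbs : ((1/2) * r)^2 ≤ s^2 := by nlinarith [hslb, hspos]
    have hlbr : ((1/2) * r)^2 ≤ r^2 := by nlinarith [hrpos]
    have hmpos : (0:ℝ) < ((1/2)*r)^2 := by positivity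
    have hupos : (0:ℝ) < s^2 := by positivity
    have hvpos : (0:ℝ) < r^2 := by positivity
    have hdiffb : |s^2 - r^2| ≤ (5/2) * (r * t) := by
      have h1 : s^2 - r^2 = 2*R + t^2 := by linarith [hid]
      rw [h1]
      have h2 : |2*R + t^2| ≤ 2*|R| + t^2 := by
        calc |2*R + t^2| ≤ |2*R| + |t^2| := abs_add_le _ _
        _ = 2*|R| + t^2 := by rw [abs_mul, abs_of_nonneg (sq_nonneg t)]; norm_num
      have h3 : t^2 ≤ (1/2) * (r * t) := by nlinarith [htr, htpos]
      calc |2*R + t^2| ≤ 2*|R| + t^2 := h2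
      _ ≤ 2*(r*t) + (1/2)*(r*t) := by linarith [hRle, h3]
      _ = (5/2) * (r*t) := by ring
    have hrp4 : (0:ℝ) ≤ r ^ (p-4) := Real.rpow_nonneg hr0 _
    have hcb_low : (((1/2)*r)^2 : ℝ) ^ (p/2 - 1 - 1) ≤ 4 * r^(p - 4) := by
      have e1 : (((1/2)*r)^2 : ℝ) ^ ((p-4)/2) = ((1/2)*r) ^ (p-4) :=
        sq_rpow_half (by positivity) _
      rw [show p/2 - 1 - 1 = (p-4)/2 by ring, e1,
        Real.mul_rpow (by norm_num : (0:ℝ) ≤ 1/2) hr0]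
      have h2 : ((1/2):ℝ) ^ (p-4) ≤ ((1/2):ℝ) ^ (-2:ℝ) :=
        Real.rpow_le_rpow_of_exponent_ge (by norm_num) (by norm_num) (by linarith)
      have h3 : ((1/2):ℝ) ^ (-2:ℝ) = 4 := by
        rw [Real.rpow_neg (by norm_num), rpow_two_eq_sq (by norm_num : (0:ℝ) ≤ 1/2)]
        norm_num
      nlinarith [h2, h3, hrp4]
    have hcb_high : ((((1+1/p))*r)^2 : ℝ) ^ (p/2 - 1 - 1) ≤ 4 * r^(p - 4) := by
      have hb0 : (0:ℝ) ≤ (1+1/p)*r := by positivity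
      have e1 : ((((1+1/p))*r)^2 : ℝ) ^ ((p-4)/2) = ((1+1/p)*r) ^ (p-4) :=
        sq_rpow_half hb0 _
      rw [show p/2 - 1 - 1 = (p-4)/2 by ring, e1,
        Real.mul_rpow (by positivity) hr0]
      have hexp : ((1+1/p):ℝ) ^ (p-4) ≤ 3 := by
        calc ((1+1/p):ℝ) ^ (p-4) ≤ ((1+1/p):ℝ) ^ p := by
              apply rpow_le_rpow_of_exponent_le _ (by linarith)
              have : (0:ℝ) < 1/p := by positivity
              linarith
        _ ≤ (Real.exp (1/p)) ^ p := by
              apply Real.rpow_le_rpow (by positivity) _ hp0.le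
              linarith [Real.add_one_le_exp (1/p)]
        _ = Real.exp 1 := by
              rw [← Real.exp_mul, one_div_mul_cancel hp0.ne']
        _ ≤ 3 := by linarith [Real.exp_one_lt_d9]
      nlinarith [hexp, hrp4]
    have hq'0 : (0:ℝ) < p/2 - 1 := by linarith
    have hkey : |(s^2:ℝ)^(p/2-1) - (r^2:ℝ)^(p/2-1)|
        ≤ (p/2-1) * (4 * r^(p-4)) * |s^2 - r^2| := by
      rcases le_or_gt p 4 with hp4 | hp4
      · have hq'1 : p/2 - 1 ≤ 1 := by linarith
        rcases le_total ((r:ℝ)^2) (s^2) with hvu | hvu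
        · rw [abs_of_nonneg (by linarith : (0:ℝ) ≤ s^2 - r^2),
            abs_of_nonneg (sub_nonneg.mpr (Real.rpow_le_rpow hvpos.le hvu (by linarith)))]
          calc (s^2:ℝ)^(p/2-1) - (r^2)^(p/2-1)
              ≤ (p/2-1) * ((((1/2)*r)^2:ℝ)) ^ (p/2-1-1) * (s^2 - r^2) :=
                diff_rpow_le_concave hq'0 hq'1 hmpos hlbr hvu
          _ ≤ (p/2-1) * (4 * r^(p-4)) * (s^2 - r^2) := by
              apply mul_le_mul_of_nonneg_right _ (by linarith)
              exact mul_le_mul_of_nonneg_left hcb_low hq'0.le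
        · rw [abs_sub_comm ((s^2:ℝ)^(p/2-1)),
            abs_of_nonneg (sub_nonneg.mpr (Real.rpow_le_rpow hupos.le hvu (by linarith))),
            abs_sub_comm ((s:ℝ)^2)]
          rw [abs_of_nonneg (by linarith : (0:ℝ) ≤ r^2 - s^2)]
          calc (r^2:ℝ)^(p/2-1) - (s^2)^(p/2-1)
              ≤ (p/2-1) * ((((1/2)*r)^2:ℝ)) ^ (p/2-1-1) * (r^2 - s^2) :=
                diff_rpow_le_concave hq'0 hq'1 hmpos hlbs hvu
          _ ≤ (p/2-1) * (4 * r^(p-4)) * (r^2 - s^2) := by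
              apply mul_le_mul_of_nonneg_right _ (by linarith)
              exact mul_le_mul_of_nonneg_left hcb_low hq'0.le
      · have hq'1 : 1 ≤ p/2 - 1 := by linarith
        have h1p : (0:ℝ) < 1/p := by positivity
        have hubr : (r:ℝ)^2 ≤ ((1+1/p)*r)^2 := by nlinarith [mul_pos h1p hvpos, sq_nonneg ((1/p)*r)]
        rcases le_total ((r:ℝ)^2) (s^2) with hvu | hvu
        · rw [abs_of_nonneg (by linarith : (0:ℝ) ≤ s^2 - r^2),
            abs_of_nonneg (sub_nonneg.mpr (Real.rpow_le_rpow hvpos.le hvu (by linarith)))]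
          calc (s^2:ℝ)^(p/2-1) - (r^2)^(p/2-1)
              ≤ (p/2-1) * (((1+1/p)*r)^2:ℝ) ^ (p/2-1-1) * (s^2 - r^2) :=
                diff_rpow_le_convex hq'1 hvpos.le hvu hupos hub
          _ ≤ (p/2-1) * (4 * r^(p-4)) * (s^2 - r^2) := by
              apply mul_le_mul_of_nonneg_right _ (by linarith)
              exact mul_le_mul_of_nonneg_left hcb_high (by linarith)
        · rw [abs_sub_comm ((s^2:ℝ)^(p/2-1)),
            abs_of_nonneg (sub_nonneg.mpr (Real.rpow_le_rpow hupos.le hvu (by linarith))),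
            abs_sub_comm ((s:ℝ)^2)]
          rw [abs_of_nonneg (by linarith : (0:ℝ) ≤ r^2 - s^2)]
          calc (r^2:ℝ)^(p/2-1) - (s^2)^(p/2-1)
              ≤ (p/2-1) * (((1+1/p)*r)^2:ℝ) ^ (p/2-1-1) * (r^2 - s^2) :=
                diff_rpow_le_convex hq'1 hupos.le hvu hvpos hubr
          _ ≤ (p/2-1) * (4 * r^(p-4)) * (r^2 - s^2) := by
              apply mul_le_mul_of_nonneg_right _ (by linarith)
              exact mul_le_mul_of_nonneg_left hcb_high (by linarith)
    -- first order bound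
    have hfo : (s^2:ℝ)^(p/2) - (r^2:ℝ)^(p/2)
        ≤ (p/2) * (s^2:ℝ)^(p/2-1) * (s^2 - r^2) := by
      have h := tangent_le (by linarith : (1:ℝ) ≤ p/2) hvpos.le hupos
      linarith [h]
    -- Bregman bound
    have hBreg : (s^2:ℝ)^(p/2) - (r^2:ℝ)^(p/2) - (p/2) * (r^2:ℝ)^(p/2-1) * (s^2 - r^2)
        ≤ (p/2) * ((p/2-1) * (4 * r^(p-4))) * (s^2 - r^2)^2 := by
      have h1 : (s^2:ℝ)^(p/2) - (r^2:ℝ)^(p/2) - (p/2) * (r^2:ℝ)^(p/2-1) * (s^2 - r^2)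
          ≤ (p/2) * ((s^2 - r^2) * ((s^2:ℝ)^(p/2-1) - (r^2:ℝ)^(p/2-1))) := by
        linarith [hfo]
      have h2 : (s^2 - r^2) * ((s^2:ℝ)^(p/2-1) - (r^2:ℝ)^(p/2-1))
          ≤ |s^2 - r^2| * |(s^2:ℝ)^(p/2-1) - (r^2:ℝ)^(p/2-1)| := by
        rw [← abs_mul]; exact le_abs_self _
      have h3 : |s^2 - r^2| * |(s^2:ℝ)^(p/2-1) - (r^2:ℝ)^(p/2-1)|
          ≤ |s^2 - r^2| * ((p/2-1) * (4 * r^(p-4)) * |s^2 - r^2|) :=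
        mul_le_mul_of_nonneg_left hkey (abs_nonneg _)
      have h4 : |s^2 - r^2| * ((p/2-1) * (4 * r^(p-4)) * |s^2 - r^2|)
          = (p/2-1) * (4 * r^(p-4)) * (s^2 - r^2)^2 := by
        rw [sq ((s:ℝ)^2 - r^2), ← abs_mul_abs_self ((s:ℝ)^2 - r^2)]
        ring
      have h5 := h2.trans (h3.trans_eq h4)
      have h6 : (p/2) * ((s^2 - r^2) * ((s^2:ℝ)^(p/2-1) - (r^2:ℝ)^(p/2-1)))
          ≤ (p/2) * ((p/2-1) * (4 * r^(p-4)) * (s^2 - r^2)^2) :=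
        mul_le_mul_of_nonneg_left h5 (by linarith)
      nlinarith [h1, h6]
    -- conversions and conclusion
    have ea : (s^2:ℝ)^(p/2) = s^p := sq_rpow_half hs0 p
    have eb : (r^2:ℝ)^(p/2) = r^p := sq_rpow_half hr0 p
    have ec : (r^2:ℝ)^(p/2-1) = r^(p-2) := by
      rw [show p/2 - 1 = (p-2)/2 by ring, sq_rpow_half hr0]
    have ed : s^2 - r^2 = 2*R + t^2 := by linarith [hid]
    have ee : r^(p-4) * r^2 = r^(p-2) := by
      rw [← rpow_two_eq_sq hr0, ← Real.rpow_add hrpos]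
      ring_nf
    have hsq : (s^2 - r^2)^2 ≤ (25/4) * (r^2 * t^2) := by
      have h8 : |s^2 - r^2|^2 ≤ ((5/2)*(r*t))^2 :=
        pow_le_pow_left₀ (abs_nonneg _) hdiffb 2
      rw [sq_abs] at h8
      calc (s^2-r^2)^2 ≤ ((5/2)*(r*t))^2 := h8
      _ = (25/4)*(r^2*t^2) := by ring
    rw [ea, eb, ec, ed] at hBreg
    have hrhs : (p/2) * ((p/2-1) * (4 * r^(p-4))) * (2*R + t^2)^2
        ≤ 25 * ((p/2) * (p/2-1)) * (r^(p-2) * t^2) := by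
      have h7 : (p/2) * ((p/2-1) * (4 * r^(p-4))) * (2*R + t^2)^2
          ≤ (p/2) * ((p/2-1) * (4 * r^(p-4))) * ((25/4) * (r^2 * t^2)) := by
        apply mul_le_mul_of_nonneg_left _
          (mul_nonneg (by linarith) (mul_nonneg (by linarith)
            (by positivity : (0:ℝ) ≤ 4 * r^(p-4))))
        rw [← ed]; exact hsq
      calc (p/2) * ((p/2-1) * (4 * r^(p-4))) * (2*R + t^2)^2
          ≤ (p/2) * ((p/2-1) * (4 * r^(p-4))) * ((25/4) * (r^2 * t^2)) := h7
      _ = 25 * ((p/2) * (p/2-1)) * ((r^(p-4) * r^2) * t^2) := by ring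
      _ = 25 * ((p/2) * (p/2-1)) * (r^(p-2) * t^2) := by rw [ee]
    have hW : (0:ℝ) ≤ r^(p-2) * t^2 := mul_nonneg hrpnn (sq_nonneg t)
    have hcoef : 25*((p/2)*(p/2-1)) + p/2 ≤ 7*p^2 := coefB hp0
    have hcW : (25*((p/2)*(p/2-1)) + p/2) * (r^(p-2) * t^2) ≤ 7*p^2 * (r^(p-2) * t^2) :=
      mul_le_mul_of_nonneg_right hcoef hW
    have h2p : (0:ℝ) ≤ 2*(p+1)^p * t^p :=
      mul_nonneg (mul_nonneg (by norm_num) (Real.rpow_nonneg (by linarith) p)) htpnn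
    linarith [hBreg, hrhs, hcW, h2p]
  · -- |b| large compared to |a|
    push_neg at hcase
    have h1 : s ^ p ≤ ((p+1)*t) ^ p :=
      Real.rpow_le_rpow hs0 (by linarith [hst, hcase]) hp0.le
    have h2 : ((p+1)*t)^p = (p+1)^p * t^p := Real.mul_rpow (by linarith) ht0
    have h4 : p * (r ^ (p-2) * (-R)) ≤ (p+1)^p * t^p := by
      have hnR : -R ≤ r * t := by linarith [neg_abs_le R, hRle]
      have hb1 : r^(p-2) * (-R) ≤ (p*t)^(p-2) * ((p*t)*t) := by
        have m1 : r^(p-2) ≤ (p*t)^(p-2) := Real.rpow_le_rpow hr0 hcase.le (by linarith)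
        have m2 : r * t ≤ (p*t) * t := by nlinarith [hcase.le, htpos]
        calc r^(p-2) * (-R) ≤ r^(p-2) * (r*t) :=
              mul_le_mul_of_nonneg_left hnR hrpnn
        _ ≤ (p*t)^(p-2) * ((p*t)*t) := by
              apply mul_le_mul m1 m2 (by nlinarith [hRle, abs_nonneg R]) _
              · positivity
      have hb2 : p * ((p*t)^(p-2) * ((p*t)*t)) = p^p * t^p := by
        have e1 : (p*t)^(p-2) = p^(p-2) * t^(p-2) := Real.mul_rpow hp0.le ht0
        have e2 : p * (p^(p-2) * p) = p^p := by
          rw [show (p:ℝ)^(p-2) = p^p / p^(2:ℝ) from by rw [← Real.rpow_sub hp0],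
            rpow_two_eq_sq hp0.le]
          field_simp
        have e3 : t^(p-2) * t^2 = t^p := by
          rw [← rpow_two_eq_sq ht0, ← Real.rpow_add htpos]
          norm_num
        calc p * ((p*t)^(p-2) * ((p*t)*t)) = (p * (p^(p-2) * p)) * (t^(p-2) * t^2) := by
              rw [e1]; ring
        _ = p^p * t^p := by rw [e2, e3]
      have hpp : p^p ≤ (p+1)^p := Real.rpow_le_rpow hp0.le (by linarith) hp0.le
      calc p * (r ^ (p-2) * (-R)) ≤ p * ((p*t)^(p-2) * ((p*t)*t)) :=
            mul_le_mul_of_nonneg_left hb1 hp0.le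
      _ = p^p * t^p := hb2
      _ ≤ (p+1)^p * t^p := mul_le_mul_of_nonneg_right hpp htpnn
    have hrpn : (0:ℝ) ≤ r ^ p := Real.rpow_nonneg hr0 p
    have hQ : (0:ℝ) ≤ 7 * p^2 * (r^(p-2) * t^2) := by positivity
    nlinarith [h1, h2, h4, hrpn, hQ, htpnn]


lemma ptB {p : ℝ} (hp : 2 ≤ p) (a b : ℂ) :
    ‖a + b‖ ^ p ≤
      ‖a‖ ^ p + p * (‖a‖ ^ (p - 2) * ((starRingEnd ℂ) a * b).re)
        + 7 * p^2 * (‖a‖ ^ (p - 2) * ‖b‖ ^ 2)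
        + 2 * (p+1)^p * ‖b‖ ^ p := by
  refine ptB_scalar hp (norm_nonneg a) (norm_nonneg _) (norm_nonneg b)
    (abs_sq_expand a b) ?_ (norm_add_le a b) ?_
  · calc |((starRingEnd ℂ) a * b).re| ≤ ‖(starRingEnd ℂ) a * b‖ :=
          Complex.abs_re_le_norm _
    _ = ‖a‖ * ‖b‖ := by rw [norm_mul, Complex.norm_conj]
  · have h := norm_add_le (a + b) (-b)
    rw [add_neg_cancel_right, norm_neg] at h
    exact h


variable {ι : Type*} [Fintype ι]

noncomputable def Phi (p : ℝ) (x : ι → ℂ) : ℝ := ∑ i, ‖x i‖ ^ p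

noncomputable def Nrm (p : ℝ) (x : ι → ℂ) : ℝ := Phi p x ^ (1/p)

noncomputable def Lf (p : ℝ) (x y : ι → ℂ) : ℝ :=
  ∑ i, ‖x i‖ ^ (p-2) * ((starRingEnd ℂ) (x i) * y i).re

lemma Phi_nonneg (p : ℝ) (x : ι → ℂ) : 0 ≤ Phi p x :=
  Finset.sum_nonneg fun i _ => Real.rpow_nonneg (norm_nonneg _) _

lemma Nrm_nonneg (p : ℝ) (x : ι → ℂ) : 0 ≤ Nrm p x :=
  Real.rpow_nonneg (Phi_nonneg p x) _

lemma Phi_zero {p : ℝ} (hp : p ≠ 0) : Phi p (0 : ι → ℂ) = 0 := by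
  simp [Phi, Real.zero_rpow hp]

lemma Nrm_zero {p : ℝ} (hp0 : 0 < p) : Nrm p (0 : ι → ℂ) = 0 := by
  rw [Nrm, Phi_zero hp0.ne', Real.zero_rpow (by positivity : 1/p ≠ 0)]

lemma Phi_eq_Nrm_rpow {p : ℝ} (hp0 : 0 < p) (x : ι → ℂ) : Phi p x = Nrm p x ^ p := by
  rw [Nrm, ← Real.rpow_mul (Phi_nonneg p x), one_div_mul_cancel hp0.ne', Real.rpow_one]

lemma Nrm_le_of_Phi_le {p c : ℝ} (hp0 : 0 < p) {x : ι → ℂ} (h : Phi p x ≤ c) :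
    Nrm p x ≤ c ^ (1/p) :=
  Real.rpow_le_rpow (Phi_nonneg p x) h (by positivity)

lemma Phi_le_of_Nrm_le {p c : ℝ} (hp0 : 0 < p) (hc : 0 ≤ c) {x : ι → ℂ} (h : Nrm p x ≤ c) :
    Phi p x ≤ c ^ p := by
  rw [Phi_eq_Nrm_rpow hp0]
  exact Real.rpow_le_rpow (Nrm_nonneg p x) h hp0.le

lemma Nrm_smul {p : ℝ} (hp0 : 0 < p) (c : ℝ) (x : ι → ℂ) :
    Nrm p (c • x) = |c| * Nrm p x := by
  have h1 : Phi p (c • x) = |c|^p * Phi p x := by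
    unfold Phi
    rw [Finset.mul_sum]
    apply Finset.sum_congr rfl
    intro i _
    have h2 : ‖(c • x) i‖ = |c| * ‖x i‖ := by
      simp [Pi.smul_apply, Complex.real_smul, norm_mul, Complex.norm_real, Real.norm_eq_abs]
    rw [h2, Real.mul_rpow (abs_nonneg c) (norm_nonneg _)]
  rw [Nrm, h1, Real.mul_rpow (Real.rpow_nonneg (abs_nonneg c) p) (Phi_nonneg p x),
    ← Real.rpow_mul (abs_nonneg c), mul_one_div_cancel hp0.ne', Real.rpow_one, Nrm]

lemma Nrm_neg (p : ℝ) (x : ι → ℂ) : Nrm p (-x) = Nrm p x := by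
  simp [Nrm, Phi]

lemma Nrm_add_le {p : ℝ} (hp : 1 ≤ p) (x y : ι → ℂ) :
    Nrm p (x + y) ≤ Nrm p x + Nrm p y := by
  have hp0 : (0:ℝ) < p := by linarith
  have h1 : Phi p (x + y) ≤ ∑ i, (‖x i‖ + ‖y i‖) ^ p := by
    apply Finset.sum_le_sum
    intro i _
    exact Real.rpow_le_rpow (norm_nonneg _) (norm_add_le _ _) hp0.le
  calc Nrm p (x+y) ≤ (∑ i, (‖x i‖ + ‖y i‖) ^ p) ^ (1/p) :=
        Real.rpow_le_rpow (Phi_nonneg _ _) h1 (by positivity)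
  _ ≤ Nrm p x + Nrm p y :=
        Real.Lp_add_le_of_nonneg Finset.univ hp (fun i _ => norm_nonneg _)
          (fun i _ => norm_nonneg _)

lemma Nrm_sub_le {p : ℝ} (hp : 1 ≤ p) (x y : ι → ℂ) :
    Nrm p (x - y) ≤ Nrm p x + Nrm p y := by
  rw [sub_eq_add_neg]
  exact (Nrm_add_le hp x (-y)).trans (by rw [Nrm_neg])

lemma Nrm_sum_le {p : ℝ} (hp : 1 ≤ p) {κ : Type*} (t : Finset κ) (f : κ → ι → ℂ) :
    Nrm p (∑ j ∈ t, f j) ≤ ∑ j ∈ t, Nrm p (f j) := by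
  classical
  induction t using Finset.induction with
  | empty => simp [Nrm_zero (by linarith : (0:ℝ) < p)]
  | @insert j t hj ih =>
    rw [Finset.sum_insert hj, Finset.sum_insert hj]
    exact (Nrm_add_le hp _ _).trans (by linarith [ih])

lemma Lf_add (p : ℝ) (x y z : ι → ℂ) : Lf p x (y + z) = Lf p x y + Lf p x z := by
  unfold Lf
  rw [← Finset.sum_add_distrib]
  apply Finset.sum_congr rfl
  intro i _
  simp [Pi.add_apply, mul_add, Complex.add_re]

lemma Lf_smul (p : ℝ) (x y : ι → ℂ) (c : ℝ) : Lf p x (c • y) = c * Lf p x y := by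
  unfold Lf
  rw [Finset.mul_sum]
  apply Finset.sum_congr rfl
  intro i _
  simp [Pi.smul_apply, Complex.real_smul, Complex.mul_re, Complex.ofReal_re, Complex.ofReal_im]
  ring

lemma Lf_zero_right (p : ℝ) (x : ι → ℂ) : Lf p x 0 = 0 := by simp [Lf]

lemma Lf_sum (p : ℝ) (x : ι → ℂ) {κ : Type*} (t : Finset κ) (f : κ → ι → ℂ) :
    Lf p x (∑ j ∈ t, f j) = ∑ j ∈ t, Lf p x (f j) := by
  classical
  induction t using Finset.induction with
  | empty => simp [Lf_zero_right]
  | @insert j t hj ih =>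
    rw [Finset.sum_insert hj, Finset.sum_insert hj, Lf_add, ih]

lemma core_le2 {p : ℝ} (hp1 : 1 ≤ p) (hp2 : p ≤ 2) (x y : ι → ℂ) :
    Phi p (x + y) ≤ Phi p x + p * Lf p x y + 6 * Phi p y := by
  have h : Phi p (x + y) ≤ ∑ i, (‖x i‖ ^ p
      + p * (‖x i‖ ^ (p-2) * ((starRingEnd ℂ) (x i) * y i).re)
      + 6 * ‖y i‖ ^ p) := by
    apply Finset.sum_le_sum
    intro i _
    exact ptA hp1 hp2 (x i) (y i)
  calc Phi p (x + y) ≤ _ := h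
  _ = Phi p x + p * Lf p x y + 6 * Phi p y := by
    unfold Phi Lf
    rw [Finset.sum_add_distrib, Finset.sum_add_distrib, ← Finset.mul_sum, ← Finset.mul_sum]

lemma holder_step {p : ℝ} (hp : 2 ≤ p) (x y : ι → ℂ) :
    ∑ i, ‖x i‖ ^ (p-2) * (‖y i‖ ^ 2 : ℝ)
      ≤ (Phi p x) ^ ((p-2)/p) * (Phi p y) ^ (2/p) := by
  rcases eq_or_lt_of_le hp with hp2 | hp2
  · subst hp2
    rw [show ((2:ℝ)-2)/2 = 0 by norm_num, Real.rpow_zero, one_mul,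
      show (2:ℝ)/2 = 1 by norm_num, Real.rpow_one]
    unfold Phi
    apply le_of_eq
    apply Finset.sum_congr rfl
    intro i _
    rw [show (2:ℝ)-2 = 0 by norm_num, Real.rpow_zero, one_mul,
      rpow_two_eq_sq (norm_nonneg _)]
  · have hp20 : (0:ℝ) < p - 2 := by linarith
    have hp0 : (0:ℝ) < p := by linarith
    have hpq : ((p/(p-2)) : ℝ).HolderConjugate (p/2) := by
      rw [Real.holderConjugate_iff]
      constructor
      · rw [lt_div_iff₀ hp20]
        linarith
      · field_simp
        ring
    have h := Real.inner_le_Lp_mul_Lq_of_nonneg Finset.univ hpq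
      (f := fun i => ‖x i‖ ^ (p-2)) (g := fun i => (‖y i‖ ^ 2 : ℝ))
      (fun i _ => Real.rpow_nonneg (norm_nonneg _) _)
      (fun i _ => sq_nonneg _)
    have e1 : ∀ i : ι, (‖x i‖ ^ (p-2)) ^ (p/(p-2)) = ‖x i‖ ^ p := by
      intro i
      rw [← Real.rpow_mul (norm_nonneg _)]
      congr 1
      field_simp
    have e2 : ∀ i : ι, ((‖y i‖ ^ 2 : ℝ)) ^ (p/2) = ‖y i‖ ^ p :=
      fun i => sq_rpow_half (norm_nonneg _) p
    simp only [e1, e2] at h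
    rw [one_div_div, show (1:ℝ)/(p/2) = 2/p by rw [one_div_div]] at h
    exact h

lemma core_ge2 {p : ℝ} (hp : 2 ≤ p) (x y : ι → ℂ) :
    Phi p (x + y) ≤ Phi p x + p * Lf p x y
      + 7*p^2 * ((Phi p x) ^ ((p-2)/p) * (Phi p y) ^ (2/p)) + 2*(p+1)^p * Phi p y := by
  have h : Phi p (x + y) ≤ ∑ i, (‖x i‖ ^ p
      + p * (‖x i‖ ^ (p-2) * ((starRingEnd ℂ) (x i) * y i).re)
      + 7*p^2 * (‖x i‖ ^ (p-2) * (‖y i‖ ^ 2 : ℝ))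
      + 2*(p+1)^p * ‖y i‖ ^ p) := by
    apply Finset.sum_le_sum
    intro i _
    exact ptB hp (x i) (y i)
  have h2 : ∑ i, (‖x i‖ ^ p
      + p * (‖x i‖ ^ (p-2) * ((starRingEnd ℂ) (x i) * y i).re)
      + 7*p^2 * (‖x i‖ ^ (p-2) * (‖y i‖ ^ 2 : ℝ))
      + 2*(p+1)^p * ‖y i‖ ^ p)
      = Phi p x + p * Lf p x y
        + 7*p^2 * (∑ i, ‖x i‖ ^ (p-2) * (‖y i‖ ^ 2 : ℝ))
        + 2*(p+1)^p * Phi p y := by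
    unfold Phi Lf
    rw [Finset.sum_add_distrib, Finset.sum_add_distrib, Finset.sum_add_distrib,
      ← Finset.mul_sum, ← Finset.mul_sum, ← Finset.mul_sum]
  have h3 : 7*p^2 * (∑ i, ‖x i‖ ^ (p-2) * (‖y i‖ ^ 2 : ℝ))
      ≤ 7*p^2 * ((Phi p x) ^ ((p-2)/p) * (Phi p y) ^ (2/p)) := by
    apply mul_le_mul_of_nonneg_left (holder_step hp x y) (by positivity)
  linarith [h, h2.le, h2.ge, h3]


set_option maxHeartbeats 2000000 in
theorem coreA {p : ℝ} (hp1 : 1 < p) (hp2 : p ≤ 2)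
    (S : Set (ι → ℂ)) (A : ι → ℂ) {D : ℝ} (hD : 0 ≤ D)
    (hSd : ∀ Y ∈ S, Nrm p (Y - A) ≤ D)
    (hex : ∀ x : ι → ℂ, ∃ Y, Y ∈ S ∧ Lf p x (Y - A) ≤ 0) :
    ∃ X : ℕ → (ι → ℂ), (∀ i, X i ∈ S) ∧ ∀ k : ℕ, 1 ≤ k →
      Nrm p (A - (k:ℝ)⁻¹ • ∑ i ∈ Finset.range k, X i)
        ≤ 2 * Real.exp 2 / p ^ (1/p) * (k:ℝ) ^ (1/p - 1) * D := by
  classical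
  have hp0 : (0:ℝ) < p := by linarith
  let pick : (ι → ℂ) → (ι → ℂ) := fun x => (hex x).choose
  have pickS : ∀ x, pick x ∈ S := fun x => (hex x).choose_spec.1
  have pickL : ∀ x, Lf p x (pick x - A) ≤ 0 := fun x => (hex x).choose_spec.2
  let Δ : ℕ → ι → ℂ := fun k =>
    Nat.rec (motive := fun _ => ι → ℂ) 0 (fun _ prev => prev + (pick prev - A)) k
  have Δ0 : Δ 0 = 0 := rfl
  have Δsucc : ∀ k, Δ (k+1) = Δ k + (pick (Δ k) - A) := fun k => rfl
  have hΦy : ∀ x, Phi p (pick x - A) ≤ D ^ p := fun x =>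
    Phi_le_of_Nrm_le hp0 hD (hSd _ (pickS x))
  have main : ∀ k : ℕ, Phi p (Δ k) ≤ 6 * k * D ^ p := by
    intro k
    induction k with
    | zero => rw [Δ0, Phi_zero hp0.ne']; norm_num
    | succ n ih =>
      have h := core_le2 hp1.le hp2 (Δ n) (pick (Δ n) - A)
      rw [← Δsucc n] at h
      have hL : p * Lf p (Δ n) (pick (Δ n) - A) ≤ 0 := by
        have h1 := pickL (Δ n)
        have h2 : p * Lf p (Δ n) (pick (Δ n) - A) ≤ p * 0 :=
          mul_le_mul_of_nonneg_left h1 hp0.le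
        simpa using h2
      have hyd := hΦy (Δ n)
      push_cast
      push_cast at ih
      linarith [h, ih, hyd, hL]
  refine ⟨fun k => pick (Δ k), fun k => pickS _, ?_⟩
  intro k hk
  have hk0 : (0:ℝ) < (k:ℝ) := by exact_mod_cast hk
  have hsum : ∀ m : ℕ, ∑ i ∈ Finset.range m, pick (Δ i) = Δ m + (m:ℝ) • A := by
    intro m
    induction m with
    | zero => simp [Δ0]
    | succ n ih =>
      rw [Finset.sum_range_succ, ih, Δsucc]
      push_cast
      rw [add_smul, one_smul]
      abel
  have hAk : A - (k:ℝ)⁻¹ • ∑ i ∈ Finset.range k, pick (Δ i) = (-(k:ℝ)⁻¹) • Δ k := by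
    rw [hsum k, smul_add, smul_smul, inv_mul_cancel₀ hk0.ne', one_smul, neg_smul]
    abel
  rw [hAk, Nrm_smul hp0, abs_neg, abs_inv, abs_of_pos hk0]
  have h1 : Nrm p (Δ k) ≤ (6*(k:ℝ))^(1/p) * D := by
    have h2 := Nrm_le_of_Phi_le hp0 (main k)
    calc Nrm p (Δ k) ≤ (6 * (k:ℝ) * D^p)^(1/p) := h2
    _ = (6*(k:ℝ))^(1/p) * (D^p)^(1/p) := Real.mul_rpow (by positivity) (Real.rpow_nonneg hD p)
    _ = (6*(k:ℝ))^(1/p) * D := by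
        rw [← Real.rpow_mul hD, mul_one_div_cancel hp0.ne', Real.rpow_one]
  have hsc : (k:ℝ)⁻¹ * ((6*(k:ℝ))^(1/p)) ≤ 2 * Real.exp 2 / p^(1/p) * (k:ℝ)^(1/p-1) := by
    have e1 : ((6*(k:ℝ)))^(1/p) = 6^(1/p) * (k:ℝ)^(1/p) :=
      Real.mul_rpow (by norm_num) hk0.le
    have e2 : (k:ℝ)^(1/p - 1) = (k:ℝ)^(1/p) * (k:ℝ)⁻¹ := by
      rw [Real.rpow_sub hk0, Real.rpow_one, div_eq_mul_inv]
    have h6 : (6:ℝ)^(1/p) * p^(1/p) ≤ 2 * Real.exp 2 := by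
      rw [← Real.mul_rpow (by norm_num) hp0.le]
      have h7 : ((6*p:ℝ))^(1/p) ≤ (6*p) := by
        have := Real.rpow_le_rpow_of_exponent_le (by nlinarith : (1:ℝ) ≤ 6*p)
          (by rw [div_le_one hp0]; linarith : 1/p ≤ 1)
        rwa [Real.rpow_one] at this
      have hexp : (2.7:ℝ) < Real.exp 1 := lt_trans (by norm_num) Real.exp_one_gt_d9
      have hexp2 : Real.exp 2 = Real.exp 1 * Real.exp 1 := by
        rw [← Real.exp_add]; norm_num
      nlinarith [h7, hexp, hexp2]
    have hppos : (0:ℝ) < p^(1/p) := Real.rpow_pos_of_pos hp0 _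
    rw [e1, e2]
    have h8 : (6:ℝ)^(1/p) ≤ 2*Real.exp 2 / p^(1/p) := by
      rw [le_div_iff₀ hppos]; exact h6
    have h9 : (0:ℝ) ≤ (k:ℝ)^(1/p) * (k:ℝ)⁻¹ := by positivity
    calc (k:ℝ)⁻¹ * (6^(1/p) * (k:ℝ)^(1/p)) = 6^(1/p) * ((k:ℝ)^(1/p) * (k:ℝ)⁻¹) := by ring
    _ ≤ (2*Real.exp 2/p^(1/p)) * ((k:ℝ)^(1/p) * (k:ℝ)⁻¹) := mul_le_mul_of_nonneg_right h8 h9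
  calc (k:ℝ)⁻¹ * Nrm p (Δ k) ≤ (k:ℝ)⁻¹ * ((6*(k:ℝ))^(1/p) * D) :=
        mul_le_mul_of_nonneg_left h1 (by positivity)
  _ = ((k:ℝ)⁻¹ * (6*(k:ℝ))^(1/p)) * D := by ring
  _ ≤ (2*Real.exp 2/p^(1/p) * (k:ℝ)^(1/p-1)) * D := mul_le_mul_of_nonneg_right hsc hD

set_option maxHeartbeats 2000000 in
theorem coreB {p : ℝ} (hp : 2 ≤ p)
    (S : Set (ι → ℂ)) (A : ι → ℂ) {D : ℝ} (hD : 0 ≤ D)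
    (hSd : ∀ Y ∈ S, Nrm p (Y - A) ≤ D)
    (hex : ∀ x : ι → ℂ, ∃ Y, Y ∈ S ∧ Lf p x (Y - A) ≤ 0) :
    ∃ X : ℕ → (ι → ℂ), (∀ i, X i ∈ S) ∧ ∀ k : ℕ, 1 ≤ k →
      Nrm p (A - (k:ℝ)⁻¹ • ∑ i ∈ Finset.range k, X i)
        ≤ Real.exp 2 * Real.sqrt (2*(p-1)/k) * D := by
  classical
  have hp0 : (0:ℝ) < p := by linarith
  have hp1 : (1:ℝ) ≤ p := by linarith
  set β : ℝ := Real.exp 2 ^ 2 * (2*(p-1)) with hβdef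
  have hexp : (2.7:ℝ) < Real.exp 1 := lt_trans (by norm_num) Real.exp_one_gt_d9
  have hexp2 : Real.exp 2 = Real.exp 1 * Real.exp 1 := by rw [← Real.exp_add]; norm_num
  have hexp' : (2.718:ℝ) < Real.exp 1 := lt_trans (by norm_num) Real.exp_one_gt_d9
  have hE2 : (7.38:ℝ) < Real.exp 2 := by nlinarith [hexp']
  have hp11 : (1:ℝ) ≤ p - 1 := by linarith
  have hE2sq : (54.4:ℝ) < Real.exp 2 ^ 2 := by nlinarith [hE2]
  have hβ52 : 104*(p-1) ≤ β := by
    have h := mul_le_mul_of_nonneg_right hE2sq.le (show (0:ℝ) ≤ 2*(p-1) by linarith)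
    rw [hβdef]
    nlinarith [h]
  have hβ104 : (104:ℝ) ≤ β := by nlinarith [hβ52, hp11]
  have hβpos : (0:ℝ) < β := by linarith
  let pick : (ι → ℂ) → (ι → ℂ) := fun x => (hex x).choose
  have pickS : ∀ x, pick x ∈ S := fun x => (hex x).choose_spec.1
  have pickL : ∀ x, Lf p x (pick x - A) ≤ 0 := fun x => (hex x).choose_spec.2
  let Δ : ℕ → ι → ℂ := fun k =>
    Nat.rec (motive := fun _ => ι → ℂ) 0 (fun _ prev => prev + (pick prev - A)) k
  have Δ0 : Δ 0 = 0 := rfl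
  have Δsucc : ∀ k, Δ (k+1) = Δ k + (pick (Δ k) - A) := fun k => rfl
  have hNy : ∀ x, Nrm p (pick x - A) ≤ D := fun x => hSd _ (pickS x)
  have hΦy : ∀ x, Phi p (pick x - A) ≤ D ^ p := fun x =>
    Phi_le_of_Nrm_le hp0 hD (hNy x)
  have htriv : ∀ k : ℕ, Nrm p (Δ k) ≤ k * D := by
    intro k
    induction k with
    | zero => rw [Δ0, Nrm_zero hp0]; simp
    | succ n ih =>
      rw [Δsucc]
      calc Nrm p (Δ n + (pick (Δ n) - A)) ≤ Nrm p (Δ n) + Nrm p (pick (Δ n) - A) :=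
            Nrm_add_le hp1 _ _
      _ ≤ n*D + D := add_le_add ih (hNy _)
      _ = (n+1)*D := by ring
      _ = ((n+1 : ℕ) : ℝ)*D := by push_cast; ring
  have main : ∀ k : ℕ, Phi p (Δ k) ≤ (β * k)^(p/2) * D^p := by
    intro k
    induction k with
    | zero =>
      rw [Δ0, Phi_zero hp0.ne']
      rw [Nat.cast_zero, mul_zero, Real.zero_rpow (by positivity : p/2 ≠ 0), zero_mul]
    | succ n ih =>
      have hn0 : (0:ℝ) ≤ (n:ℝ) := Nat.cast_nonneg n
      rcases le_or_gt ((n:ℝ)+1) β with hsmall | hbig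
      · -- trivial regime
        have h1 : Nrm p (Δ (n+1)) ≤ ((n:ℝ)+1) * D := by
          have := htriv (n+1)
          push_cast at this
          exact this
        have h2 : Phi p (Δ (n+1)) ≤ (((n:ℝ)+1)*D)^p :=
          Phi_le_of_Nrm_le hp0 (by positivity) h1
        have h3 : (((n:ℝ)+1)*D)^p ≤ ((β*((n:ℝ)+1))^((1:ℝ)/2)*D)^p := by
          apply Real.rpow_le_rpow (by positivity) _ hp0.le
          apply mul_le_mul_of_nonneg_right _ hD
          have h4 : ((n:ℝ)+1) = ((((n:ℝ)+1)^2))^((1:ℝ)/2) := by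
            rw [show ((1:ℝ)/2) = 1/2 by norm_num, sq_rpow_half (by positivity) 1,
              Real.rpow_one]
          rw [h4]
          apply Real.rpow_le_rpow (by positivity) (by nlinarith) (by norm_num)
        have h5 : ((β*((n:ℝ)+1))^((1:ℝ)/2)*D)^p = (β*((n:ℝ)+1))^(p/2) * D^p := by
          rw [Real.mul_rpow (Real.rpow_nonneg (by positivity) _) hD,
            ← Real.rpow_mul (by positivity)]
          congr 2
          ring
        push_cast
        calc Phi p (Δ (n+1)) ≤ (((n:ℝ)+1)*D)^p := h2
        _ ≤ ((β*((n:ℝ)+1))^((1:ℝ)/2)*D)^p := h3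
        _ = (β*((n:ℝ)+1))^(p/2) * D^p := h5
      · -- recursion regime
        have hkβ : β - 1 ≤ (n:ℝ) := by linarith
        have hnpos : (0:ℝ) < (n:ℝ) := by linarith
        have hβn : (0:ℝ) < β * n := by positivity
        have h := core_ge2 hp (Δ n) (pick (Δ n) - A)
        rw [← Δsucc n] at h
        have hL : p * Lf p (Δ n) (pick (Δ n) - A) ≤ 0 := by
          have h1 := pickL (Δ n)
          have h2 : p * Lf p (Δ n) (pick (Δ n) - A) ≤ p * 0 :=
            mul_le_mul_of_nonneg_left h1 hp0.le
          simpa using h2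
        have hyd : Phi p (pick (Δ n) - A) ≤ D^p := hΦy _
        have hx1 : (Phi p (Δ n))^((p-2)/p) ≤ ((β*n)^(p/2) * D^p)^((p-2)/p) :=
          Real.rpow_le_rpow (Phi_nonneg _ _) ih (div_nonneg (by linarith) hp0.le)
        have hx2 : ((β*(n:ℝ))^(p/2) * D^p)^((p-2)/p) = (β*n)^((p-2)/2) * D^(p-2) := by
          rw [Real.mul_rpow (Real.rpow_nonneg hβn.le _) (Real.rpow_nonneg hD _),
            ← Real.rpow_mul hβn.le, ← Real.rpow_mul hD]
          congr 2
          · field_simp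
          · field_simp
        have hx3 : (Phi p (pick (Δ n) - A))^(2/p) ≤ ((D:ℝ)^p)^(2/p) :=
          Real.rpow_le_rpow (Phi_nonneg _ _) hyd (by positivity)
        have hx4 : ((D:ℝ)^p)^(2/p) = D^(2:ℝ) := by
          rw [← Real.rpow_mul hD]
          congr 1
          field_simp
        have hx5 : (Phi p (Δ n))^((p-2)/p) * (Phi p (pick (Δ n) - A))^(2/p)
            ≤ ((β*n)^((p-2)/2) * D^(p-2)) * D^(2:ℝ) := by
          apply mul_le_mul (hx1.trans_eq hx2) (hx3.trans_eq hx4)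
            (Real.rpow_nonneg (Phi_nonneg _ _) _)
          positivity
        have hDD : D^(p-2) * D^(2:ℝ) = D^p := by
          rcases eq_or_lt_of_le hD with hD0 | hDpos
          · rcases eq_or_lt_of_le hp with hp2 | hp2
            · rw [← hD0, ← hp2]
              norm_num
            · rw [← hD0, Real.zero_rpow (by linarith : p-2 ≠ 0),
                Real.zero_rpow hp0.ne', zero_mul]
          · rw [← Real.rpow_add hDpos]
            congr 1
            ring
        have hx6 : (Phi p (Δ n))^((p-2)/p) * (Phi p (pick (Δ n) - A))^(2/p)
            ≤ (β*n)^((p-2)/2) * D^p := by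
          calc (Phi p (Δ n))^((p-2)/p) * (Phi p (pick (Δ n) - A))^(2/p)
              ≤ ((β*n)^((p-2)/2) * D^(p-2)) * D^(2:ℝ) := hx5
          _ = (β*n)^((p-2)/2) * (D^(p-2) * D^(2:ℝ)) := by ring
          _ = (β*n)^((p-2)/2) * D^p := by rw [hDD]
        -- numeric key inequality
        have hW0 : (0:ℝ) ≤ (β*n)^((p-2)/2) := Real.rpow_nonneg hβn.le _
        have hgain : (β*(n:ℝ))^(p/2) + (p/2) * (β*n)^((p-2)/2) * β
            ≤ (β*((n:ℝ)+1))^(p/2) := by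
          have ht := tangent_le (q := p/2) (u := β*((n:ℝ)+1)) (v := β*n)
            (by linarith) (by positivity) hβn
          rw [show β*((n:ℝ)+1) - β*n = β by ring,
            show p/2 - 1 = (p-2)/2 by ring] at ht
          exact ht
        have hA1 : 2*(p+1)^p ≤ 8*p^2 * (20*p)^(p-2) := by
          have h1 : ((p+1):ℝ)^p ≤ (2*p)^p :=
            Real.rpow_le_rpow (by linarith) (by linarith) hp0.le
          have h2 : ((2*p):ℝ)^p = (2*p)^(2:ℝ) * (2*p)^(p-2) := by
            rw [← Real.rpow_add (by positivity)]
            congr 1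
            ring
          have h3 : ((2*p):ℝ)^(2:ℝ) = 4*p^2 := by
            rw [rpow_two_eq_sq (by positivity)]
            ring
          have h4 : ((2*p):ℝ)^(p-2) ≤ (20*p)^(p-2) :=
            Real.rpow_le_rpow (by positivity) (by linarith) (by linarith)
          have h2' : ((2*p):ℝ)^p = 4*p^2 * (2*p)^(p-2) := by rw [h2, h3]
          calc 2*(p+1)^p ≤ 2*((2*p)^p) :=
                mul_le_mul_of_nonneg_left h1 (by norm_num)
          _ = 8*p^2*(((2*p):ℝ)^(p-2)) := by rw [h2']; ring
          _ ≤ 8*p^2*(((20*p):ℝ)^(p-2)) :=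
                mul_le_mul_of_nonneg_left h4 (by positivity)
        have hA2 : ((20*p):ℝ)^(p-2) ≤ (β*n)^((p-2)/2) := by
          have h5 : ((20*p):ℝ)^2 ≤ β*n := by
            have hb52p : (52:ℝ)*p ≤ β := by nlinarith [hβ52]
            have hn1 : β - 1 ≤ n := hkβ
            have h6 : β*(β-1) ≤ β*n := mul_le_mul_of_nonneg_left hn1 hβpos.le
            nlinarith [hb52p, h6, hp0]
          calc ((20*p):ℝ)^(p-2) = (((20*p):ℝ)^2)^((p-2)/2) :=
                (sq_rpow_half (by positivity) _).symm
          _ ≤ (β*n)^((p-2)/2) :=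
                Real.rpow_le_rpow (by positivity) h5 (by linarith)
        have hA3 : 7*p^2 * ((β*n)^((p-2)/2)) + 2*(p+1)^p ≤ (p/2) * (β*n)^((p-2)/2) * β := by
          have h7 : 2*(p+1)^p ≤ 8*p^2 * (β*n)^((p-2)/2) := by
            calc 2*(p+1)^p ≤ 8*p^2 * (20*p)^(p-2) := hA1
            _ ≤ 8*p^2 * (β*n)^((p-2)/2) :=
                mul_le_mul_of_nonneg_left hA2 (by positivity)
          have h8 : (15:ℝ)*p^2 ≤ (p/2)*β := by nlinarith [hβ52]
          have h9 : (15:ℝ)*p^2 * (β*n)^((p-2)/2) ≤ (p/2)*β * (β*n)^((p-2)/2) :=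
            mul_le_mul_of_nonneg_right h8 hW0
          nlinarith [h7, h9]
        -- assemble
        have hDp0 : (0:ℝ) ≤ D^p := Real.rpow_nonneg hD p
        have hfin : Phi p (Δ (n+1))
            ≤ (β*(n:ℝ))^(p/2) * D^p + 7*p^2 * ((β*n)^((p-2)/2) * D^p) + 2*(p+1)^p * D^p := by
          have c1 : 7*p^2 * ((Phi p (Δ n)) ^ ((p-2)/p) * (Phi p (pick (Δ n) - A)) ^ (2/p))
              ≤ 7*p^2 * ((β*n)^((p-2)/2) * D^p) :=
            mul_le_mul_of_nonneg_left hx6 (by positivity)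
          have c2 : 2*(p+1)^p * Phi p (pick (Δ n) - A) ≤ 2*(p+1)^p * D^p :=
            mul_le_mul_of_nonneg_left hyd
              (by positivity)
          linarith [h, hL, ih, c1, c2]
        have hkey : (β*(n:ℝ))^(p/2) * D^p + 7*p^2 * ((β*n)^((p-2)/2) * D^p) + 2*(p+1)^p * D^p
            ≤ (β*((n:ℝ)+1))^(p/2) * D^p := by
          have h10 : (β*(n:ℝ))^(p/2) + 7*p^2 * (β*n)^((p-2)/2) + 2*(p+1)^p
              ≤ (β*((n:ℝ)+1))^(p/2) := by
            nlinarith [hgain, hA3]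
          have := mul_le_mul_of_nonneg_right h10 hDp0
          nlinarith [this]
        push_cast
        linarith [hfin, hkey]
  refine ⟨fun k => pick (Δ k), fun k => pickS _, ?_⟩
  intro k hk
  have hk0 : (0:ℝ) < (k:ℝ) := by exact_mod_cast hk
  have hsum : ∀ m : ℕ, ∑ i ∈ Finset.range m, pick (Δ i) = Δ m + (m:ℝ) • A := by
    intro m
    induction m with
    | zero => simp [Δ0]
    | succ n ih =>
      rw [Finset.sum_range_succ, ih, Δsucc]
      push_cast
      rw [add_smul, one_smul]
      abel
  have hAk : A - (k:ℝ)⁻¹ • ∑ i ∈ Finset.range k, pick (Δ i) = (-(k:ℝ)⁻¹) • Δ k := by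
    rw [hsum k, smul_add, smul_smul, inv_mul_cancel₀ hk0.ne', one_smul, neg_smul]
    abel
  rw [hAk, Nrm_smul hp0, abs_neg, abs_inv, abs_of_pos hk0]
  have h1 : Nrm p (Δ k) ≤ (β*(k:ℝ))^((1:ℝ)/2) * D := by
    have h2 := Nrm_le_of_Phi_le hp0 (main k)
    calc Nrm p (Δ k) ≤ ((β*(k:ℝ))^(p/2) * D^p)^(1/p) := h2
    _ = (β*(k:ℝ))^((1:ℝ)/2) * D := by
        rw [Real.mul_rpow (Real.rpow_nonneg (by positivity) _) (Real.rpow_nonneg hD _),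
          ← Real.rpow_mul (by positivity : (0:ℝ) ≤ β*(k:ℝ)), ← Real.rpow_mul hD,
          mul_one_div_cancel hp0.ne', Real.rpow_one]
        congr 2
        field_simp
  have hkid : (k:ℝ)⁻¹ * (β*(k:ℝ))^((1:ℝ)/2) = Real.sqrt (β/(k:ℝ)) := by
    have e : β*(k:ℝ) = (β/(k:ℝ)) * ((k:ℝ))^2 := by field_simp
    rw [e, Real.mul_rpow (div_nonneg hβpos.le hk0.le) (sq_nonneg _),
      show ((((k:ℝ))^2:ℝ))^((1:ℝ)/2) = (k:ℝ) by
        rw [show ((1:ℝ)/2) = (1:ℝ)/2 by norm_num, sq_rpow_half hk0.le 1, Real.rpow_one],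
      Real.sqrt_eq_rpow]
    field_simp
  have hre : Real.sqrt (β/(k:ℝ)) = Real.exp 2 * Real.sqrt (2*(p-1)/(k:ℝ)) := by
    have e : β/(k:ℝ) = (Real.exp 2)^2 * (2*(p-1)/(k:ℝ)) := by
      rw [hβdef]; field_simp
    rw [e, Real.sqrt_mul (sq_nonneg _), Real.sqrt_sq (Real.exp_pos 2).le]
  calc (k:ℝ)⁻¹ * Nrm p (Δ k) ≤ (k:ℝ)⁻¹ * ((β*(k:ℝ))^((1:ℝ)/2) * D) :=
        mul_le_mul_of_nonneg_left h1 (by positivity)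
  _ = ((k:ℝ)⁻¹ * (β*(k:ℝ))^((1:ℝ)/2)) * D := by ring
  _ = Real.sqrt (β/(k:ℝ)) * D := by rw [hkid]
  _ = Real.exp 2 * Real.sqrt (2*(p-1)/(k:ℝ)) * D := by rw [hre]


def flat {d : ℕ} (M : Matrix (Fin d) (Fin d) ℂ) : (Fin d × Fin d) → ℂ :=
  fun x => M x.1 x.2

lemma flat_sub {d : ℕ} (M N : Matrix (Fin d) (Fin d) ℂ) :
    flat (M - N) = flat M - flat N := rfl

lemma flat_smul {d : ℕ} (c : ℝ) (M : Matrix (Fin d) (Fin d) ℂ) :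
    flat (c • M) = c • flat M := rfl

lemma flat_zero {d : ℕ} : flat (0 : Matrix (Fin d) (Fin d) ℂ) = 0 := rfl

lemma flat_sum {d : ℕ} {κ : Type*} (t : Finset κ) (f : κ → Matrix (Fin d) (Fin d) ℂ) :
    flat (∑ j ∈ t, f j) = ∑ j ∈ t, flat (f j) := by
  funext x
  simp [flat, Matrix.sum_apply]

lemma lpNorm_eq {d : ℕ} (p : ℝ) (M : Matrix (Fin d) (Fin d) ℂ) :
    lpNorm p M = Nrm p (flat M) := by
  rw [lpNorm, Nrm, Phi]
  congr 1
  rw [Fintype.sum_prod_type]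
  rfl


end AC

open AC in
/-- **Approximate Carathéodory for entrywise `ℓ_p`-norms** on `M_d(ℂ)`:
the case `1 < p ≤ 2` with rate `k^{1/p-1}` and the case `2 ≤ p < ∞` with
rate `√(2(p-1)/k)`. -/
theorem approx_caratheodory_lp {d : ℕ} (p : ℝ)
    (S : Set (Matrix (Fin d) (Fin d) ℂ)) (hS : S.Nonempty)
    (hbdd : ∃ C : ℝ, ∀ X ∈ S, lpNorm p X ≤ C)
    (A : Matrix (Fin d) (Fin d) ℂ) (hA : A ∈ convexHull ℝ S) :
    ((1 < p ∧ p ≤ 2) →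
      ∃ X : ℕ → Matrix (Fin d) (Fin d) ℂ, (∀ i, X i ∈ S) ∧
        ∀ k : ℕ, 1 ≤ k →
          lpNorm p (A - (k : ℝ)⁻¹ • ∑ i ∈ Finset.range k, X i) ≤
            2 * Real.exp 2 / p ^ (1 / p) * (k : ℝ) ^ (1 / p - 1) * lpDiam p S) ∧
    ((2 ≤ p) →
      ∃ X : ℕ → Matrix (Fin d) (Fin d) ℂ, (∀ i, X i ∈ S) ∧
        ∀ k : ℕ, 1 ≤ k →
          lpNorm p (A - (k : ℝ)⁻¹ • ∑ i ∈ Finset.range k, X i) ≤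
            Real.exp 2 * Real.sqrt (2 * (p - 1) / k) * lpDiam p S) := by
  classical
  rw [convexHull_eq] at hA
  obtain ⟨κ, t, w, z, hw0, hw1, hzS, hcm⟩ := hA
  have hAz : ∑ j ∈ t, w j • z j = A := by
    rw [← Finset.centerMass_eq_of_sum_1 t z hw1, hcm]
  have setup : 1 ≤ p →
      (0 ≤ lpDiam p S) ∧
      (∀ Y' ∈ flat '' S, Nrm p (Y' - flat A) ≤ lpDiam p S) ∧
      (∀ x : (Fin d × Fin d) → ℂ, ∃ Y, Y ∈ flat '' S ∧ Lf p x (Y - flat A) ≤ 0) := by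
    intro hp
    have hp0 : (0:ℝ) < p := by linarith
    obtain ⟨C, hC⟩ := hbdd
    have hbd : BddAbove {r | ∃ X ∈ S, ∃ Y ∈ S, r = lpNorm p (X - Y)} := by
      refine ⟨2*C, ?_⟩
      rintro r ⟨X, hX, Y, hY, rfl⟩
      rw [lpNorm_eq, flat_sub]
      calc Nrm p (flat X - flat Y) ≤ Nrm p (flat X) + Nrm p (flat Y) := Nrm_sub_le hp _ _
      _ ≤ C + C := add_le_add
            (by rw [← lpNorm_eq]; exact hC X hX) (by rw [← lpNorm_eq]; exact hC Y hY)
      _ = 2*C := by ring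
    obtain ⟨X₀, hX₀⟩ := hS
    have hD0 : 0 ≤ lpDiam p S := by
      have hmem : (0:ℝ) ∈ {r | ∃ X ∈ S, ∃ Y ∈ S, r = lpNorm p (X - Y)} := by
        refine ⟨X₀, hX₀, X₀, hX₀, ?_⟩
        rw [sub_self, lpNorm_eq, flat_zero, Nrm_zero hp0]
      exact le_csSup hbd hmem
    have hXY : ∀ X ∈ S, ∀ Y ∈ S, Nrm p (flat X - flat Y) ≤ lpDiam p S := by
      intro X hX Y hY
      have hmem : lpNorm p (X - Y) ∈ {r | ∃ X ∈ S, ∃ Y ∈ S, r = lpNorm p (X - Y)} :=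
        ⟨X, hX, Y, hY, rfl⟩
      have h := le_csSup hbd hmem
      rwa [lpNorm_eq, flat_sub] at h
    have hrepr : ∀ Y : Matrix (Fin d) (Fin d) ℂ,
        flat Y - flat A = ∑ j ∈ t, w j • (flat Y - flat (z j)) := by
      intro Y
      have h1 : ∑ j ∈ t, w j • (flat Y - flat (z j))
          = (∑ j ∈ t, w j) • flat Y - ∑ j ∈ t, w j • flat (z j) := by
        rw [Finset.sum_smul]
        rw [← Finset.sum_sub_distrib]
        apply Finset.sum_congr rfl
        intro j _
        rw [smul_sub]
      have h2 : ∑ j ∈ t, w j • flat (z j) = flat A := by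
        rw [← hAz, flat_sum]
        apply Finset.sum_congr rfl
        intro j _
        rw [flat_smul]
      rw [h1, h2, hw1, one_smul]
    constructor
    · exact hD0
    constructor
    · rintro _ ⟨Y, hY, rfl⟩
      rw [hrepr Y]
      calc Nrm p (∑ j ∈ t, w j • (flat Y - flat (z j)))
          ≤ ∑ j ∈ t, Nrm p (w j • (flat Y - flat (z j))) := Nrm_sum_le hp t _
      _ = ∑ j ∈ t, w j * Nrm p (flat Y - flat (z j)) := by
          apply Finset.sum_congr rfl
          intro j hj
          rw [Nrm_smul hp0, abs_of_nonneg (hw0 j hj)]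
      _ ≤ ∑ j ∈ t, w j * lpDiam p S := by
          apply Finset.sum_le_sum
          intro j hj
          exact mul_le_mul_of_nonneg_left (hXY Y hY (z j) (hzS j hj)) (hw0 j hj)
      _ = lpDiam p S := by rw [← Finset.sum_mul, hw1, one_mul]
    · intro x
      by_contra hcon
      push_neg at hcon
      have hzero : ∑ j ∈ t, w j * Lf p x (flat (z j) - flat A) = 0 := by
        have h1 : ∀ j ∈ t, w j * Lf p x (flat (z j) - flat A)
            = Lf p x (w j • (flat (z j) - flat A)) := fun j _ => (Lf_smul p x _ (w j)).symm
        rw [Finset.sum_congr rfl h1, ← Lf_sum]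
        have h2 : ∑ j ∈ t, w j • (flat (z j) - flat A) = 0 := by
          have h3 : ∑ j ∈ t, w j • (flat (z j) - flat A)
              = ∑ j ∈ t, w j • flat (z j) - (∑ j ∈ t, w j) • flat A := by
            rw [Finset.sum_smul, ← Finset.sum_sub_distrib]
            apply Finset.sum_congr rfl
            intro j _
            rw [smul_sub]
          have h4 : ∑ j ∈ t, w j • flat (z j) = flat A := by
            rw [← hAz, flat_sum]
            apply Finset.sum_congr rfl
            intro j _
            rw [flat_smul]
          rw [h3, h4, hw1, one_smul, sub_self]
        rw [h2, Lf_zero_right]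
      obtain ⟨j₀, hj₀t, hj₀⟩ : ∃ j ∈ t, w j ≠ 0 := by
        by_contra hall
        push_neg at hall
        have h5 : ∑ j ∈ t, w j = 0 := Finset.sum_eq_zero hall
        rw [hw1] at h5
        norm_num at h5
      have hpos : 0 < ∑ j ∈ t, w j * Lf p x (flat (z j) - flat A) := by
        apply Finset.sum_pos'
        · intro j hj
          rcases eq_or_lt_of_le (hw0 j hj) with h0 | h0
          · rw [← h0, zero_mul]
          · exact le_of_lt (mul_pos h0 (hcon _ ⟨z j, hzS j hj, rfl⟩))
        · exact ⟨j₀, hj₀t, mul_pos ((hw0 j₀ hj₀t).lt_of_ne (Ne.symm hj₀))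
            (hcon _ ⟨z j₀, hzS j₀ hj₀t, rfl⟩)⟩
      rw [hzero] at hpos
      exact lt_irrefl 0 hpos
  constructor
  · rintro ⟨hp1, hp2⟩
    obtain ⟨hD0, hSd, hex⟩ := setup hp1.le
    obtain ⟨X', hX'S, hbound⟩ := coreA hp1 hp2 (flat '' S) (flat A) hD0 hSd hex
    have hXc : ∀ i, ∃ M, M ∈ S ∧ flat M = X' i := by
      intro i
      obtain ⟨M, hM, hMf⟩ := hX'S i
      exact ⟨M, hM, hMf⟩
    refine ⟨fun i => (hXc i).choose, fun i => ((hXc i).choose_spec).1, ?_⟩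
    intro k hk
    have hfl : ∀ i, flat ((hXc i).choose) = X' i := fun i => ((hXc i).choose_spec).2
    have hb := hbound k hk
    rw [lpNorm_eq]
    have e1 : flat (∑ i ∈ Finset.range k, (hXc i).choose) = ∑ i ∈ Finset.range k, X' i := by
      rw [flat_sum]
      exact Finset.sum_congr rfl (fun i _ => hfl i)
    have e : flat (A - (k:ℝ)⁻¹ • ∑ i ∈ Finset.range k, (hXc i).choose)
        = flat A - (k:ℝ)⁻¹ • ∑ i ∈ Finset.range k, X' i := by
      rw [flat_sub, flat_smul, e1]
    rw [e]
    exact hb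
  · intro hp
    obtain ⟨hD0, hSd, hex⟩ := setup (by linarith)
    obtain ⟨X', hX'S, hbound⟩ := coreB hp (flat '' S) (flat A) hD0 hSd hex
    have hXc : ∀ i, ∃ M, M ∈ S ∧ flat M = X' i := by
      intro i
      obtain ⟨M, hM, hMf⟩ := hX'S i
      exact ⟨M, hM, hMf⟩
    refine ⟨fun i => (hXc i).choose, fun i => ((hXc i).choose_spec).1, ?_⟩
    intro k hk
    have hfl : ∀ i, flat ((hXc i).choose) = X' i := fun i => ((hXc i).choose_spec).2
    have hb := hbound k hk
    rw [lpNorm_eq]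
    have e1 : flat (∑ i ∈ Finset.range k, (hXc i).choose) = ∑ i ∈ Finset.range k, X' i := by
      rw [flat_sum]
      exact Finset.sum_congr rfl (fun i _ => hfl i)
    have e : flat (A - (k:ℝ)⁻¹ • ∑ i ∈ Finset.range k, (hXc i).choose)
        = flat A - (k:ℝ)⁻¹ • ∑ i ∈ Finset.range k, X' i := by
      rw [flat_sub, flat_smul, e1]
    rw [e]
    exact hb
end

section
/- Let ρ ∈ M_{d₀}(ℂ)⊗⋯⊗M_{d_n}(ℂ) be a state. Then R(ρ) ≤ μ₁(ρ) ≤ 2·R(ρ), where R is the robustness of entanglement. -/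
open scoped ComplexOrder
open scoped Pointwise

noncomputable def singVals {m : Type*} [Fintype m] [DecidableEq m]
    (A : Matrix m m ℂ) (i : m) : ℝ :=
  Real.sqrt ((Matrix.isHermitian_conjTranspose_mul_self A).eigenvalues i)

/-- The (unnormalized) Schatten `p`-norm of a complex square matrix. -/
noncomputable def schattenNorm {m : Type*} [Fintype m] [DecidableEq m]
    (p : ℝ) (A : Matrix m m ℂ) : ℝ :=
  (∑ i, singVals A i ^ p) ^ (1 / p)

/-- The elementary tensor (Kronecker) product of a family of matrices. -/
noncomputable def kprod {n : ℕ} {d : Fin (n+1) → ℕ}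
    (ρ : ∀ i, Matrix (Fin (d i)) (Fin (d i)) ℂ) :
    Matrix (∀ i, Fin (d i)) (∀ i, Fin (d i)) ℂ :=
  Matrix.of fun x y => ∏ i, ρ i (x i) (y i)

/-- The set `P_p` of signed elementary tensor products of psd matrices of Schatten `p`-norm
at most one. -/
noncomputable def Pset {n : ℕ} (d : Fin (n+1) → ℕ) (p : ℝ) :
    Set (Matrix (∀ i, Fin (d i)) (∀ i, Fin (d i)) ℂ) :=
  {M | ∃ (s : ℝ) (ρ : ∀ i, Matrix (Fin (d i)) (Fin (d i)) ℂ),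
    (s = 1 ∨ s = -1) ∧ (∀ i, (ρ i).PosSemidef) ∧
    schattenNorm p (kprod ρ) ≤ 1 ∧ M = s • kprod ρ}

/-- The gauge (Minkowski functional) `μ_p` of `B_p = conv(P_p)`. -/
noncomputable def mu {n : ℕ} (d : Fin (n+1) → ℕ) (p : ℝ)
    (M : Matrix (∀ i, Fin (d i)) (∀ i, Fin (d i)) ℂ) : ℝ :=
  gauge (convexHull ℝ (Pset d p)) M

/-- A separable state: a trace-one finite sum of elementary tensor products of psd matrices. -/
def IsSepState {n : ℕ} {d : Fin (n+1) → ℕ}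
    (ρ : Matrix (∀ i, Fin (d i)) (∀ i, Fin (d i)) ℂ) : Prop :=
  ρ.trace = 1 ∧ ∃ (m : ℕ) (σ : Fin m → ∀ i, Matrix (Fin (d i)) (Fin (d i)) ℂ),
    (∀ j i, (σ j i).PosSemidef) ∧ ρ = ∑ j, kprod (σ j)

/-- The robustness of entanglement (shifted by the constant 1 as in the paper):
`R(ρ) = inf{λ ≥ 1 : ρ = (1-λ)ρ₁ + λρ₂, ρᵢ separable states}`. -/
noncomputable def robustness {n : ℕ} {d : Fin (n+1) → ℕ}
    (ρ : Matrix (∀ i, Fin (d i)) (∀ i, Fin (d i)) ℂ) : ℝ :=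
  sInf {l : ℝ | 1 ≤ l ∧ ∃ ρ₁ ρ₂ : Matrix (∀ i, Fin (d i)) (∀ i, Fin (d i)) ℂ,
    IsSepState ρ₁ ∧ IsSepState ρ₂ ∧ ρ = (1 - l) • ρ₁ + l • ρ₂}

/-! ### Auxiliary spectral lemmas -/

open Matrix in
lemma RME.trace_eq_sum_eig {m : Type*} [Fintype m] [DecidableEq m]
    {A : Matrix m m ℂ} (hA : A.IsHermitian) :
    A.trace = ((∑ i, hA.eigenvalues i : ℝ) : ℂ) := by
  rw [hA.trace_eq_sum_eigenvalues, Complex.ofReal_sum]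
  rfl

open Matrix in
open scoped MatrixOrder in
lemma RME.trace_sqrt {m : Type*} [Fintype m] [DecidableEq m]
    {B : Matrix m m ℂ} (hB : B.PosSemidef) :
    (CFC.sqrt B).trace = ((∑ i, Real.sqrt (hB.1.eigenvalues i) : ℝ) : ℂ) := by
  rw [CFC.sqrt_eq_cfc, cfc_nnreal_eq_real _ B, hB.1.cfc_eq]
  simp only [IsHermitian.cfc, Real.coe_sqrt, Real.coe_toNNReal', Unitary.conjStarAlgAut_apply,
    trace_mul_cycle, Unitary.coe_star_mul_self, one_mul, trace_diagonal]
  push_cast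
  refine Finset.sum_congr rfl fun i _ => ?_
  simp [max_eq_left (hB.eigenvalues_nonneg i)]

open Matrix in
open scoped MatrixOrder in
lemma RME.trace_psd_eq_sum_singVals {m : Type*} [Fintype m] [DecidableEq m]
    {A : Matrix m m ℂ} (hA : A.PosSemidef) :
    A.trace = ((∑ i, singVals A i : ℝ) : ℂ) := by
  have hAA : (Aᴴ * A).PosSemidef := Matrix.posSemidef_conjTranspose_mul_self A
  have hsq : A ^ 2 = Aᴴ * A := by rw [pow_two, hA.1]
  have hAeq : A = CFC.sqrt (Aᴴ * A) := (CFC.sqrt_unique (by rw [hA.1.eq]) hA.nonneg).symm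
  have h1 : A.trace = ((∑ i, Real.sqrt (hAA.1.eigenvalues i) : ℝ) : ℂ) := by
    conv_lhs => rw [hAeq]
    exact RME.trace_sqrt hAA
  rw [h1]
  norm_cast

lemma RME.psd_trace_eq_re {m : Type*} [Fintype m] [DecidableEq m]
    {A : Matrix m m ℂ} (hA : A.PosSemidef) :
    A.trace = ((A.trace.re : ℝ) : ℂ) := by
  rw [RME.trace_psd_eq_sum_singVals hA]
  simp

lemma RME.psd_re_trace_nonneg {m : Type*} [Fintype m] [DecidableEq m]
    {A : Matrix m m ℂ} (hA : A.PosSemidef) :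
    0 ≤ A.trace.re := by
  rw [RME.trace_psd_eq_sum_singVals hA]
  simp only [Complex.ofReal_re]
  exact Finset.sum_nonneg fun i _ => Real.sqrt_nonneg _

lemma RME.schattenNorm_one_psd {m : Type*} [Fintype m] [DecidableEq m]
    {A : Matrix m m ℂ} (hA : A.PosSemidef) :
    schattenNorm 1 A = A.trace.re := by
  rw [RME.trace_psd_eq_sum_singVals hA]
  simp [schattenNorm]

lemma RME.psd_eq_zero_of_trace {m : Type*} [Fintype m] [DecidableEq m]
    {A : Matrix m m ℂ} (hA : A.PosSemidef) (h : A.trace.re = 0) : A = 0 := by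
  have h1 := RME.trace_eq_sum_eig hA.1
  have h2 : ∑ i, hA.1.eigenvalues i = 0 := by
    rw [h1] at h; exact_mod_cast h
  have h3 : ∀ i, hA.1.eigenvalues i = 0 := by
    intro i
    have := Finset.sum_eq_zero_iff_of_nonneg (fun j _ => hA.eigenvalues_nonneg j) |>.mp h2
    exact this i (Finset.mem_univ i)
  have h4 : Matrix.diagonal (RCLike.ofReal ∘ hA.1.eigenvalues : m → ℂ) = 0 := by
    ext i j
    by_cases hij : i = j <;> simp [Matrix.diagonal, hij, h3]
  conv_lhs => rw [hA.1.spectral_theorem]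
  rw [h4]
  simp

lemma RME.real_smul_eq {m : Type*} (r : ℝ) (M : Matrix m m ℂ) :
    r • M = ((r : ℂ)) • M := by
  ext i j
  simp [Matrix.smul_apply, Complex.real_smul]

open Matrix in
lemma RME.psd_smul {m : Type*} [Fintype m] {A : Matrix m m ℂ} (hA : A.PosSemidef)
    {r : ℝ} (hr : 0 ≤ r) : (r • A).PosSemidef := by
  rw [RME.real_smul_eq]
  exact hA.smul (by exact_mod_cast Complex.zero_le_real.mpr hr)

/-! ### kprod lemmas -/

section kprodsec
variable {n : ℕ} {d : Fin (n+1) → ℕ}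

open Matrix

open scoped MatrixOrder in
lemma RME.kprod_psd (ρ : ∀ i, Matrix (Fin (d i)) (Fin (d i)) ℂ)
    (h : ∀ i, (ρ i).PosSemidef) : (kprod ρ).PosSemidef := by
  choose B hB using fun i => CStarAlgebra.nonneg_iff_eq_star_mul_self.mp (h i).nonneg
  suffices h' : ∃ B' : Matrix (∀ i, Fin (d i)) (∀ i, Fin (d i)) ℂ, kprod ρ = B'ᴴ * B' by
    obtain ⟨B', hB'⟩ := h'
    rw [hB']
    exact Matrix.posSemidef_conjTranspose_mul_self B'
  refine ⟨kprod B, ?_⟩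
  ext x y
  simp only [kprod, Matrix.of_apply, Matrix.mul_apply, Matrix.conjTranspose_apply]
  calc ∏ i, ρ i (x i) (y i) = ∏ i, ∑ w, (star (B i w (x i)) * B i w (y i)) := by
        refine Finset.prod_congr rfl fun i _ => ?_
        rw [hB i]
        simp [Matrix.star_eq_conjTranspose, Matrix.mul_apply, Matrix.conjTranspose_apply]
    _ = ∑ z : ∀ i, Fin (d i), ∏ i, (star (B i (z i) (x i)) * B i (z i) (y i)) :=
        Fintype.prod_sum _
    _ = ∑ z : ∀ i, Fin (d i), star (∏ i, B i (z i) (x i)) * ∏ i, B i (z i) (y i) := by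
        refine Finset.sum_congr rfl fun z _ => ?_
        rw [Finset.prod_mul_distrib, star_prod]

lemma RME.kprod_zero : kprod (d := d) (fun _ => 0) = 0 := by
  ext x y
  simp only [kprod, Matrix.of_apply, Matrix.zero_apply]
  exact Finset.prod_eq_zero (Finset.mem_univ 0) rfl

lemma RME.kprod_update_smul (ρ : ∀ i, Matrix (Fin (d i)) (Fin (d i)) ℂ)
    (j : Fin (n+1)) (c : ℂ) :
    kprod (Function.update ρ j (c • ρ j)) = c • kprod ρ := by
  ext x y
  simp only [kprod, Matrix.of_apply, Matrix.smul_apply, smul_eq_mul]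
  rw [← Finset.mul_prod_erase Finset.univ _ (Finset.mem_univ j),
      ← Finset.mul_prod_erase Finset.univ (fun i => ρ i (x i) (y i)) (Finset.mem_univ j)]
  rw [Function.update_self]
  have : ∀ i ∈ Finset.univ.erase j,
      (Function.update ρ j (c • ρ j) i) (x i) (y i) = ρ i (x i) (y i) := by
    intro i hi
    rw [Function.update_of_ne (Finset.mem_erase.mp hi).1]
  rw [Finset.prod_congr rfl this]
  simp only [Matrix.smul_apply, smul_eq_mul]
  ring

/-- The rescaled kprod of a nonneg scalar into an element of `Pset` with unit trace. -/
lemma RME.smul_kprod_eq_kprod_update (ρ : ∀ i, Matrix (Fin (d i)) (Fin (d i)) ℂ)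
    (c : ℝ) :
    c • kprod ρ = kprod (Function.update ρ 0 ((c:ℂ) • ρ 0)) := by
  rw [RME.kprod_update_smul, RME.real_smul_eq]

end kprodsec

/-! ### Decomposition of matrices into psd kprods -/

noncomputable def RME.outer {m : Type*} (v : m → ℂ) : Matrix m m ℂ :=
  Matrix.of fun x y => v x * (starRingEnd ℂ) (v y)

open Matrix in
lemma RME.outer_psd {m : Type*} [Fintype m] [DecidableEq m] (v : m → ℂ) :
    (RME.outer v).PosSemidef := by
  refine Matrix.PosSemidef.of_dotProduct_mulVec_nonneg ?_ ?_
  · ext x y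
    simp only [RME.outer, Matrix.conjTranspose_apply, Matrix.of_apply, star_mul', RingHom.coe_coe]
    simp [mul_comm]
  · intro x
    have : star x ⬝ᵥ (RME.outer v) *ᵥ x
        = (starRingEnd ℂ) (∑ q, (starRingEnd ℂ) (v q) * x q)
          * (∑ q, (starRingEnd ℂ) (v q) * x q) := by
      simp only [dotProduct, Matrix.mulVec, Pi.star_apply, RME.outer, Matrix.of_apply,
        dotProduct]
      simp only [map_sum, _root_.map_mul, Finset.sum_mul, Finset.mul_sum]
      rw [Finset.sum_comm]
      refine Finset.sum_congr rfl fun p _ => Finset.sum_congr rfl fun q _ => ?_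
      simp only [starRingEnd_self_apply, starRingEnd_apply, star_mul', star_star]
      ring
    rw [this, Complex.conj_mul']
    positivity

lemma RME.stdBasis_decomp {dd : ℕ} (a b : Fin dd) :
    ∃ (c : Fin 4 → ℂ) (P : Fin 4 → Matrix (Fin dd) (Fin dd) ℂ),
      (∀ m, (P m).PosSemidef) ∧ Matrix.single a b 1 = ∑ m, c m • P m := by
  set va : Fin dd → ℂ := fun x => if a = x then 1 else 0 with hva
  set vb : Fin dd → ℂ := fun x => if b = x then 1 else 0 with hvb
  by_cases hab : a = b
  · subst hab
    refine ⟨![1,0,0,0], fun _ => RME.outer va, fun m => RME.outer_psd _, ?_⟩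
    ext x y
    simp only [Fin.sum_univ_four, Matrix.cons_val_zero, Matrix.cons_val_one, Matrix.head_cons,
      Matrix.cons_val_two, Matrix.cons_val_three, Matrix.tail_cons, one_smul, zero_smul,
      add_zero, Matrix.add_apply, Matrix.single, Matrix.of_apply, RME.outer, hva]
    by_cases hx : a = x <;> by_cases hy : a = y <;>
      simp [hx, hy] <;> tauto
  · refine ⟨![1/2, -Complex.I/2, (Complex.I-1)/2, (Complex.I-1)/2],
      ![RME.outer (fun x => va x + vb x), RME.outer (fun x => va x - Complex.I * vb x),
        RME.outer va, RME.outer vb],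
      fun m => by fin_cases m <;> exact RME.outer_psd _, ?_⟩
    have hba : b ≠ a := fun h => hab h.symm
    ext x y
    simp only [Fin.sum_univ_four, Matrix.cons_val_zero, Matrix.cons_val_one, Matrix.head_cons,
      Matrix.cons_val_two, Matrix.cons_val_three, Matrix.tail_cons, Matrix.smul_apply,
      Matrix.single, Matrix.of_apply, RME.outer, hva, hvb, smul_eq_mul, map_add,
      map_sub, _root_.map_mul, Complex.conj_I]
    by_cases hx : a = x <;> by_cases hx2 : b = x <;> by_cases hy : a = y <;>
      by_cases hy2 : b = y <;>
      simp_all <;> ring_nf <;> (try simp [Complex.ext_iff]) <;> (try tauto) <;> norm_num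

section spansec
variable {n : ℕ} {d : Fin (n+1) → ℕ}

def RME.psdKset (d : Fin (n+1) → ℕ) : Set (Matrix (∀ i, Fin (d i)) (∀ i, Fin (d i)) ℂ) :=
  {M | ∃ σ : ∀ i, Matrix (Fin (d i)) (Fin (d i)) ℂ, (∀ i, (σ i).PosSemidef) ∧ M = kprod σ}

lemma RME.kprod_stdBasis (x y : ∀ i, Fin (d i)) :
    kprod (fun i => Matrix.single (x i) (y i) (1:ℂ)) = Matrix.single x y 1 := by
  ext u v
  simp only [kprod, Matrix.of_apply, Matrix.single]
  by_cases h : x = u ∧ y = v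
  · obtain ⟨h1, h2⟩ := h
    subst h1; subst h2
    simp
  · rw [if_neg h]
    have : ∃ i, ¬(x i = u i ∧ y i = v i) := by
      by_contra hc
      push_neg at hc
      exact h ⟨funext fun i => (hc i).1, funext fun i => (hc i).2⟩
    obtain ⟨i, hi⟩ := this
    refine Finset.prod_eq_zero (Finset.mem_univ i) ?_
    simp only [Matrix.of_apply, if_neg hi]

lemma RME.kprod_expand (ρ : ∀ i, Matrix (Fin (d i)) (Fin (d i)) ℂ)
    (c : ∀ i, Fin 4 → ℂ) (P : ∀ i, Fin 4 → Matrix (Fin (d i)) (Fin (d i)) ℂ)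
    (h : ∀ i, ρ i = ∑ m, c i m • P i m) :
    kprod ρ = ∑ g : ∀ _ : Fin (n+1), Fin 4,
      (∏ i, c i (g i)) • kprod (fun i => P i (g i)) := by
  ext x y
  simp only [kprod, Matrix.of_apply, Matrix.sum_apply, Matrix.smul_apply, smul_eq_mul]
  calc ∏ i, ρ i (x i) (y i) = ∏ i, ∑ m, c i m * P i m (x i) (y i) := by
        refine Finset.prod_congr rfl fun i _ => ?_
        rw [h i, Matrix.sum_apply]
        exact Finset.sum_congr rfl fun m _ => rfl
    _ = ∑ g : ∀ _ : Fin (n+1), Fin 4, ∏ i, (c i (g i) * P i (g i) (x i) (y i)) :=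
        Fintype.prod_sum _
    _ = ∑ g : ∀ _ : Fin (n+1), Fin 4, (∏ i, c i (g i)) * ∏ i, P i (g i) (x i) (y i) := by
        refine Finset.sum_congr rfl fun g _ => Finset.prod_mul_distrib

lemma RME.mem_spanC (M : Matrix (∀ i, Fin (d i)) (∀ i, Fin (d i)) ℂ) :
    M ∈ Submodule.span ℂ (RME.psdKset d) := by
  rw [Matrix.matrix_eq_sum_single M]
  refine Submodule.sum_mem _ fun x _ => Submodule.sum_mem _ fun y _ => ?_
  have h1 : Matrix.single x y (M x y) = (M x y) • Matrix.single x y 1 := by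
    rw [Matrix.smul_single, smul_eq_mul, mul_one]
  rw [h1]
  refine Submodule.smul_mem _ _ ?_
  choose c P hP hdec using fun i => RME.stdBasis_decomp (x i) (y i)
  rw [← RME.kprod_stdBasis x y, RME.kprod_expand _ c P hdec]
  refine Submodule.sum_mem _ fun g _ => Submodule.smul_mem _ _ ?_
  exact Submodule.subset_span ⟨fun i => P i (g i), fun i => hP i (g i), rfl⟩

open Matrix in
lemma RME.repr_real {M : Matrix (∀ i, Fin (d i)) (∀ i, Fin (d i)) ℂ} (hM : M.IsHermitian) :
    ∃ (N : ℕ) (c : Fin N → ℝ) (B : Fin N → Matrix (∀ i, Fin (d i)) (∀ i, Fin (d i)) ℂ),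
      (∀ k, B k ∈ RME.psdKset d) ∧ M = ∑ k, (c k : ℂ) • B k := by
  obtain ⟨N, f, g, hsum⟩ := Submodule.mem_span_set'.mp (RME.mem_spanC M)
  refine ⟨N, fun k => (f k).re, fun k => (g k : Matrix _ _ ℂ), fun k => (g k).2, ?_⟩
  have herm : ∀ k, ((g k : Matrix (∀ i, Fin (d i)) (∀ i, Fin (d i)) ℂ))ᴴ
      = (g k : Matrix _ _ ℂ) := by
    intro k
    obtain ⟨σ, hσ, hk⟩ := (g k).2
    rw [hk]
    exact (RME.kprod_psd σ hσ).1
  have hMH : Mᴴ = ∑ k, (starRingEnd ℂ) (f k) • (g k : Matrix _ _ ℂ) := by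
    rw [← hsum]
    rw [Matrix.conjTranspose_sum]
    refine Finset.sum_congr rfl fun k _ => ?_
    rw [Matrix.conjTranspose_smul, herm k]
    rfl
  have h2 : M = (2⁻¹ : ℂ) • (M + Mᴴ) := by
    rw [hM.eq, ← two_smul ℂ, smul_smul]
    norm_num
  rw [h2, hMH]
  conv_lhs => rw [← hsum]
  rw [← Finset.sum_add_distrib, Finset.smul_sum]
  refine Finset.sum_congr rfl fun k _ => ?_
  rw [← add_smul, smul_smul]
  congr 1
  rw [Complex.add_conj]
  ring_nf
  simp

end spansec

section convexsec
variable {n : ℕ} {d : Fin (n+1) → ℕ}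

lemma RME.zero_mem_Pset : (0 : Matrix (∀ i, Fin (d i)) (∀ i, Fin (d i)) ℂ) ∈ Pset d 1 := by
  refine ⟨1, fun _ => 0, Or.inl rfl, fun i => Matrix.PosSemidef.zero, ?_, ?_⟩
  · rw [RME.kprod_zero, RME.schattenNorm_one_psd Matrix.PosSemidef.zero]
    simp
  · rw [RME.kprod_zero, smul_zero]

lemma RME.Pset_neg {M : Matrix (∀ i, Fin (d i)) (∀ i, Fin (d i)) ℂ}
    (h : M ∈ Pset d 1) : -M ∈ Pset d 1 := by
  obtain ⟨s, τ, hs, hτ, hnorm, hM⟩ := h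
  exact ⟨-s, τ, by rcases hs with h|h <;> simp [h], hτ, hnorm, by rw [hM, neg_smul]⟩

lemma RME.neg_mem_hull {M : Matrix (∀ i, Fin (d i)) (∀ i, Fin (d i)) ℂ}
    (h : M ∈ convexHull ℝ (Pset d 1)) : -M ∈ convexHull ℝ (Pset d 1) := by
  have h1 : -Pset d 1 ⊆ Pset d 1 := fun x hx => by
    rw [Set.mem_neg] at hx
    simpa using RME.Pset_neg hx
  have hset : -Pset d 1 = Pset d 1 := by
    refine subset_antisymm h1 fun x hx => ?_
    rw [Set.mem_neg]
    exact RME.Pset_neg hx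
  rw [← hset, convexHull_neg]
  exact Set.neg_mem_neg.mpr h

lemma RME.psd_finsum {ι : Type*} (s : Finset ι)
    (f : ι → Matrix (∀ i, Fin (d i)) (∀ i, Fin (d i)) ℂ)
    (h : ∀ k ∈ s, (f k).PosSemidef) : (∑ k ∈ s, f k).PosSemidef := by
  classical
  induction s using Finset.induction_on with
  | empty => simpa using Matrix.PosSemidef.zero
  | insert _ _ hx ih =>
    rw [Finset.sum_insert hx]
    exact Matrix.PosSemidef.add (h _ (Finset.mem_insert_self _ _))
      (ih fun k hk => h k (Finset.mem_insert_of_mem hk))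

/-- A nonnegative multiple of a psd kprod with unit renormalized trace lies in `Pset`
after sign `s`. -/
lemma RME.scaled_kprod_mem_Pset (τ : ∀ i, Matrix (Fin (d i)) (Fin (d i)) ℂ)
    (hτ : ∀ i, (τ i).PosSemidef) (s : ℝ) (hs : s = 1 ∨ s = -1)
    {c : ℝ} (hc : 0 ≤ c) (hnorm : c * (kprod τ).trace.re ≤ 1) :
    s • (c • kprod τ) ∈ Pset d 1 := by
  refine ⟨s, Function.update τ 0 ((c:ℂ) • τ 0), hs, ?_, ?_, ?_⟩
  · intro i
    by_cases hi : i = 0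
    · subst hi
      rw [Function.update_self, ← RME.real_smul_eq]
      exact RME.psd_smul (hτ 0) hc
    · rw [Function.update_of_ne hi]
      exact hτ i
  · rw [← RME.smul_kprod_eq_kprod_update]
    have hpsd : (c • kprod τ).PosSemidef := RME.psd_smul (RME.kprod_psd τ hτ) hc
    rw [RME.schattenNorm_one_psd hpsd]
    rw [Matrix.trace_smul, Complex.real_smul, Complex.re_ofReal_mul]
    exact hnorm
  · rw [← RME.smul_kprod_eq_kprod_update]

lemma RME.trace_bound_hull {M : Matrix (∀ i, Fin (d i)) (∀ i, Fin (d i)) ℂ}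
    (h : M ∈ convexHull ℝ (Pset d 1)) : |M.trace.re| ≤ 1 := by
  set C : Set (Matrix (∀ i, Fin (d i)) (∀ i, Fin (d i)) ℂ) := {M | |M.trace.re| ≤ 1} with hC
  have hconv : Convex ℝ C := by
    intro x hx y hy a b ha hb hab
    simp only [hC, Set.mem_setOf_eq] at *
    have : (a • x + b • y).trace.re = a * x.trace.re + b * y.trace.re := by
      rw [Matrix.trace_add, Matrix.trace_smul, Matrix.trace_smul]
      simp [Complex.real_smul, Complex.re_ofReal_mul]
    rw [this]
    calc |a * x.trace.re + b * y.trace.re| ≤ a * |x.trace.re| + b * |y.trace.re| := by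
          refine (abs_add_le _ _).trans ?_
          rw [abs_mul, abs_mul, abs_of_nonneg ha, abs_of_nonneg hb]
      _ ≤ a * 1 + b * 1 := by
          gcongr <;> assumption
      _ = 1 := by rw [mul_one, mul_one, hab]
  have hsub : Pset d 1 ⊆ C := by
    rintro M ⟨s, τ, hs, hτ, hnorm, rfl⟩
    simp only [hC, Set.mem_setOf_eq]
    have hk := RME.kprod_psd τ hτ
    rw [Matrix.trace_smul]
    have h1 : (s • (kprod τ).trace).re = s * (kprod τ).trace.re := by
      simp [Complex.real_smul, Complex.re_ofReal_mul]
    rw [h1, abs_mul]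
    have hs1 : |s| = 1 := by rcases hs with h|h <;> simp [h]
    rw [hs1, one_mul, abs_of_nonneg (RME.psd_re_trace_nonneg hk)]
    rw [RME.schattenNorm_one_psd hk] at hnorm
    exact hnorm
  exact convexHull_min hsub hconv h

end convexsec

section buildsec
variable {n : ℕ} {d : Fin (n+1) → ℕ}

lemma RME.update_psd (τ : ∀ i, Matrix (Fin (d i)) (Fin (d i)) ℂ)
    (hτ : ∀ i, (τ i).PosSemidef) {c : ℝ} (hc : 0 ≤ c) (i : Fin (n+1)) :
    ((Function.update τ 0 ((c:ℂ) • τ 0)) i).PosSemidef := by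
  by_cases hi : i = 0
  · subst hi
    rw [Function.update_self, ← RME.real_smul_eq]
    exact RME.psd_smul (hτ 0) hc
  · rw [Function.update_of_ne hi]
    exact hτ i

lemma RME.build_sep {ι : Type*} [Fintype ι] (c : ι → ℝ) (hc : ∀ k, 0 ≤ c k)
    (τ : ι → ∀ i, Matrix (Fin (d i)) (Fin (d i)) ℂ) (hτ : ∀ k i, (τ k i).PosSemidef) :
    ∃ (m : ℕ) (σ : Fin m → ∀ i, Matrix (Fin (d i)) (Fin (d i)) ℂ),
      (∀ j i, (σ j i).PosSemidef) ∧ ∑ k, c k • kprod (τ k) = ∑ j, kprod (σ j) := by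
  set e := Fintype.equivFin ι
  refine ⟨Fintype.card ι,
    fun j => Function.update (τ (e.symm j)) 0 ((c (e.symm j) : ℂ) • τ (e.symm j) 0),
    fun j i => RME.update_psd _ (hτ _) (hc _) i, ?_⟩
  have h1 : ∀ j, kprod (Function.update (τ (e.symm j)) 0 ((c (e.symm j) : ℂ) • τ (e.symm j) 0))
      = c (e.symm j) • kprod (τ (e.symm j)) :=
    fun j => (RME.smul_kprod_eq_kprod_update _ _).symm
  rw [Finset.sum_congr rfl (fun j _ => h1 j)]
  exact (Equiv.sum_comp e.symm (fun k => c k • kprod (τ k))).symm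

lemma RME.sep_of_combo {ι : Type*} [Fintype ι] (c : ι → ℝ) (hc : ∀ k, 0 ≤ c k)
    (τ : ι → ∀ i, Matrix (Fin (d i)) (Fin (d i)) ℂ) (hτ : ∀ k i, (τ k i).PosSemidef)
    {M : Matrix (∀ i, Fin (d i)) (∀ i, Fin (d i)) ℂ}
    (hM : M = ∑ k, c k • kprod (τ k)) (htrM : M.trace = 1) : IsSepState M := by
  obtain ⟨m, σ, hσ, hsum⟩ := RME.build_sep c hc τ hτ
  exact ⟨htrM, m, σ, hσ, by rw [hM, hsum]⟩

lemma RME.sep_mem_hull {σ : Matrix (∀ i, Fin (d i)) (∀ i, Fin (d i)) ℂ}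
    (h : IsSepState σ) : σ ∈ convexHull ℝ (Pset d 1) := by
  obtain ⟨htr, m, τ, hτ, hsum⟩ := h
  set t : Fin m → ℝ := fun j => (kprod (τ j)).trace.re with ht
  have ht0 : ∀ j, 0 ≤ t j := fun j => RME.psd_re_trace_nonneg (RME.kprod_psd _ (hτ j))
  have htot : ∑ j, t j = 1 := by
    have : σ.trace = ∑ j, (kprod (τ j)).trace := by rw [hsum, Matrix.trace_sum]
    have h2 := congrArg Complex.re this
    rw [htr, Complex.re_sum] at h2
    simpa using h2.symm
  set z : Fin m → Matrix (∀ i, Fin (d i)) (∀ i, Fin (d i)) ℂ :=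
    fun j => (t j)⁻¹ • kprod (τ j) with hzdef
  have hz : ∀ j ∈ Finset.univ, z j ∈ Pset d 1 := by
    intro j _
    by_cases hj : t j = 0
    · have : kprod (τ j) = 0 := RME.psd_eq_zero_of_trace (RME.kprod_psd _ (hτ j)) hj
      rw [hzdef]
      simp only [this, smul_zero]
      exact RME.zero_mem_Pset
    · have := RME.scaled_kprod_mem_Pset (τ j) (hτ j) 1 (Or.inl rfl)
        (c := (t j)⁻¹) (inv_nonneg.mpr (ht0 j))
        (by rw [inv_mul_cancel₀ hj])
      rwa [one_smul] at this
  have hcen : Finset.univ.centerMass t z = σ := by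
    rw [Finset.centerMass_eq_of_sum_1 _ _ htot, hsum]
    refine Finset.sum_congr rfl fun j _ => ?_
    rw [hzdef]
    simp only [smul_smul]
    by_cases hj : t j = 0
    · have : kprod (τ j) = 0 := RME.psd_eq_zero_of_trace (RME.kprod_psd _ (hτ j)) hj
      rw [this]
      simp
    · rw [mul_inv_cancel₀ hj, one_smul]
  rw [← hcen]
  exact Finset.centerMass_mem_convexHull _ (fun j _ => ht0 j) (by rw [htot]; norm_num) hz

end buildsec

section keysec
variable {n : ℕ} {d : Fin (n+1) → ℕ}

lemma RME.key_decomp (ρ : Matrix (∀ i, Fin (d i)) (∀ i, Fin (d i)) ℂ)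
    (htr : ρ.trace = 1) {r : ℝ} (hr : 0 < r)
    (hmem : ρ ∈ r • convexHull ℝ (Pset d 1)) :
    ∃ l, (1 ≤ l ∧ ∃ ρ₁ ρ₂ : Matrix (∀ i, Fin (d i)) (∀ i, Fin (d i)) ℂ,
      IsSepState ρ₁ ∧ IsSepState ρ₂ ∧ ρ = (1 - l) • ρ₁ + l • ρ₂) ∧ l ≤ r := by
  obtain ⟨y, hy, hry⟩ := hmem
  have hretr : ρ.trace.re = 1 := by rw [htr]; rfl
  have hr1 : 1 ≤ r := by
    have hb := RME.trace_bound_hull hy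
    have h1 : ρ.trace.re = r * y.trace.re := by
      rw [← hry]
      show (r • y).trace.re = _
      rw [Matrix.trace_smul, Complex.real_smul, Complex.re_ofReal_mul]
    have h2 : (1:ℝ) = |r * y.trace.re| := by rw [← h1, hretr]; norm_num
    rw [abs_mul, abs_of_pos hr] at h2
    nlinarith [abs_nonneg y.trace.re]
  rw [convexHull_eq] at hy
  obtain ⟨ι, t, w, z, hw0, hw1, hz, hcen⟩ := hy
  have hzs : ∀ k : {x // x ∈ t}, z k ∈ Pset d 1 := fun k => hz k k.2
  choose s τ hs hτ hnorm hzeq using hzs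
  set p : {x // x ∈ t} → ℝ := fun k => if s k = 1 then r * w k else 0 with hp
  set q : {x // x ∈ t} → ℝ := fun k => if s k = 1 then 0 else r * w k with hq
  have hw0' : ∀ k : {x // x ∈ t}, 0 ≤ w k := fun k => hw0 k k.2
  have hp0 : ∀ k, 0 ≤ p k := fun k => by
    rw [hp]; dsimp only; split <;> [exact mul_nonneg hr.le (hw0' k); rfl]
  have hq0 : ∀ k, 0 ≤ q k := fun k => by
    rw [hq]; dsimp only; split <;> [rfl; exact mul_nonneg hr.le (hw0' k)]
  have hpq : ∀ k, p k + q k = r * w k := fun k => by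
    rw [hp, hq]; dsimp only; split <;> simp
  set A : Matrix (∀ i, Fin (d i)) (∀ i, Fin (d i)) ℂ :=
    ∑ k : {x // x ∈ t}, p k • kprod (τ k) with hA
  set Bm : Matrix (∀ i, Fin (d i)) (∀ i, Fin (d i)) ℂ :=
    ∑ k : {x // x ∈ t}, q k • kprod (τ k) with hBm
  have hApsd : A.PosSemidef := RME.psd_finsum _ _ fun k _ =>
    (RME.real_smul_eq _ _ ▸ RME.psd_smul (RME.kprod_psd _ (hτ k)) (hp0 k) : _)
  have hBpsd : Bm.PosSemidef := RME.psd_finsum _ _ fun k _ =>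
    (RME.real_smul_eq _ _ ▸ RME.psd_smul (RME.kprod_psd _ (hτ k)) (hq0 k) : _)
  have hAB : ρ = A - Bm := by
    have hy2 : y = ∑ k : {x // x ∈ t}, w k • z k := by
      rw [← hcen, Finset.centerMass_eq_of_sum_1 _ _ hw1, ← Finset.sum_coe_sort t]
    have hterm : ∀ k : {x // x ∈ t},
        (r * w (k:ι)) • z (k : ι) = p k • kprod (τ k) - q k • kprod (τ k) := by
      intro k
      rw [hzeq k]
      rcases hs k with h1 | h1
      · rw [hp, hq]
        dsimp only
        rw [if_pos h1, if_pos h1, h1, one_smul, zero_smul, sub_zero]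
      · have hne : s k ≠ 1 := by rw [h1]; norm_num
        rw [hp, hq]
        dsimp only
        rw [if_neg hne, if_neg hne, h1, zero_smul, zero_sub, smul_smul]
        rw [mul_neg_one, neg_smul]
    rw [← hry]
    show r • y = _
    rw [hy2, Finset.smul_sum]
    have : ∀ k : {x // x ∈ t}, r • (w (k:ι) • z (k:ι)) = (r * w (k:ι)) • z (k:ι) :=
      fun k => smul_smul r _ _
    rw [Finset.sum_congr rfl fun k _ => (this k).trans (hterm k), Finset.sum_sub_distrib]
  set a := A.trace.re with ha
  set b := Bm.trace.re with hb
  have hb0 : 0 ≤ b := RME.psd_re_trace_nonneg hBpsd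
  have haminus : a - b = 1 := by
    have h1 : ρ.trace = A.trace - Bm.trace := by rw [hAB, Matrix.trace_sub]
    have h2 := congrArg Complex.re h1
    rw [hretr, Complex.sub_re] at h2
    linarith [h2]
  have htrk : ∀ k, (kprod (τ k)).trace.re ≤ 1 := fun k => by
    rw [← RME.schattenNorm_one_psd (RME.kprod_psd _ (hτ k))]; exact hnorm k
  have htrk0 : ∀ k, 0 ≤ (kprod (τ k)).trace.re :=
    fun k => RME.psd_re_trace_nonneg (RME.kprod_psd _ (hτ k))
  have htrsmul : ∀ (c : ℝ) (M : Matrix (∀ i, Fin (d i)) (∀ i, Fin (d i)) ℂ),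
      (c • M).trace.re = c * M.trace.re := by
    intro c M
    rw [Matrix.trace_smul, Complex.real_smul, Complex.re_ofReal_mul]
  have hTa : a = ∑ k : {x // x ∈ t}, p k * (kprod (τ k)).trace.re := by
    rw [ha, hA, Matrix.trace_sum, Complex.re_sum]
    exact Finset.sum_congr rfl fun k _ => htrsmul _ _
  have hTb : b = ∑ k : {x // x ∈ t}, q k * (kprod (τ k)).trace.re := by
    rw [hb, hBm, Matrix.trace_sum, Complex.re_sum]
    exact Finset.sum_congr rfl fun k _ => htrsmul _ _
  have habr : a + b ≤ r := by
    rw [hTa, hTb, ← Finset.sum_add_distrib]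
    have hle : ∀ k ∈ (Finset.univ : Finset {x // x ∈ t}),
        p k * (kprod (τ k)).trace.re + q k * (kprod (τ k)).trace.re ≤ r * w k := by
      intro k _
      rw [← add_mul, hpq k]
      calc r * w (k:ι) * (kprod (τ k)).trace.re ≤ r * w (k:ι) * 1 := by
            refine mul_le_mul_of_nonneg_left (htrk k) (mul_nonneg hr.le (hw0' k))
        _ = r * w (k:ι) := mul_one _
    calc _ ≤ ∑ k : {x // x ∈ t}, r * w (k:ι) := Finset.sum_le_sum hle
      _ = r * ∑ k : {x // x ∈ t}, w (k:ι) := by rw [Finset.mul_sum]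
      _ = r := by rw [Finset.sum_coe_sort t, hw1, mul_one]
  have ha1 : 1 ≤ a := by linarith
  have ha0 : 0 < a := by linarith
  set ρ₂ := a⁻¹ • A with hρ₂
  have htrA : A.trace = (a:ℂ) := RME.psd_trace_eq_re hApsd
  have hsep2 : IsSepState ρ₂ := by
    refine RME.sep_of_combo (fun k => a⁻¹ * p k)
      (fun k => mul_nonneg (inv_nonneg.mpr ha0.le) (hp0 k)) τ hτ ?_ ?_
    · rw [hρ₂, hA, Finset.smul_sum]
      exact Finset.sum_congr rfl fun k _ => smul_smul _ _ _
    · rw [hρ₂, Matrix.trace_smul, htrA, Complex.real_smul, ← Complex.ofReal_mul,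
        inv_mul_cancel₀ ha0.ne']
      norm_num
  by_cases hbz : b = 0
  · have hBm0 : Bm = 0 := RME.psd_eq_zero_of_trace hBpsd hbz
    have hρA : ρ = A := by rw [hAB, hBm0, sub_zero]
    have ha1' : a = 1 := by linarith
    have hρρ₂ : ρ₂ = ρ := by rw [hρ₂, ha1', hρA, inv_one, one_smul]
    exact ⟨1, ⟨le_refl 1, ρ₂, ρ₂, hsep2, hsep2, by rw [hρρ₂]; simp⟩, hr1⟩
  · have hbpos : 0 < b := lt_of_le_of_ne hb0 (Ne.symm hbz)
    set ρ₁ := b⁻¹ • Bm with hρ₁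
    have htrB : Bm.trace = (b:ℂ) := RME.psd_trace_eq_re hBpsd
    have hsep1 : IsSepState ρ₁ := by
      refine RME.sep_of_combo (fun k => b⁻¹ * q k)
        (fun k => mul_nonneg (inv_nonneg.mpr hbpos.le) (hq0 k)) τ hτ ?_ ?_
      · rw [hρ₁, hBm, Finset.smul_sum]
        exact Finset.sum_congr rfl fun k _ => smul_smul _ _ _
      · rw [hρ₁, Matrix.trace_smul, htrB, Complex.real_smul, ← Complex.ofReal_mul,
          inv_mul_cancel₀ hbz]
        norm_num
    refine ⟨a, ⟨ha1, ρ₁, ρ₂, hsep1, hsep2, ?_⟩, by linarith⟩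
    have h1 : a • ρ₂ = A := by rw [hρ₂, smul_smul, mul_inv_cancel₀ ha0.ne', one_smul]
    have h2 : (1 - a) • ρ₁ = -Bm := by
      have hba : (1 - a) = -b := by linarith
      rw [hba, hρ₁, smul_smul, neg_mul, mul_inv_cancel₀ hbz, neg_smul, one_smul]
    rw [h1, h2, hAB]
    abel

end keysec

section nonemptysec
variable {n : ℕ} {d : Fin (n+1) → ℕ}

lemma RME.gauge_set_nonempty (ρ : Matrix (∀ i, Fin (d i)) (∀ i, Fin (d i)) ℂ)
    (hpsd : ρ.PosSemidef) :
    ∃ r : ℝ, 0 < r ∧ ρ ∈ r • convexHull ℝ (Pset d 1) := by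
  obtain ⟨N, c, B, hB, hsum⟩ := RME.repr_real hpsd.1
  have hBpsd : ∀ k, (B k).PosSemidef := fun k => by
    obtain ⟨σ, hσ, hk⟩ := hB k
    rw [hk]; exact RME.kprod_psd σ hσ
  set t : Fin N → ℝ := fun k => (B k).trace.re with hdt
  have ht0 : ∀ k, 0 ≤ t k := fun k => RME.psd_re_trace_nonneg (hBpsd k)
  set r : ℝ := 1 + ∑ k, |c k| * t k with hdr
  have hsum_nonneg : (0:ℝ) ≤ ∑ k, |c k| * t k :=
    Finset.sum_nonneg fun k _ => mul_nonneg (abs_nonneg _) (ht0 k)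
  have hr : 0 < r := by rw [hdr]; linarith
  refine ⟨r, hr, ?_⟩
  set w : Option (Fin N) → ℝ := fun o => o.elim 1 (fun k => |c k| * t k) with hdw
  set zz : Option (Fin N) → Matrix (∀ i, Fin (d i)) (∀ i, Fin (d i)) ℂ :=
    fun o => o.elim 0 (fun k => ((if 0 ≤ c k then (1:ℝ) else -1) * (t k)⁻¹) • B k) with hdz
  have hw0 : ∀ o ∈ (Finset.univ : Finset (Option (Fin N))), 0 ≤ w o := by
    rintro (_|k) _
    · norm_num [hdw]
    · exact mul_nonneg (abs_nonneg _) (ht0 k)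
  have hwsum : ∑ o, w o = r := by
    rw [Fintype.sum_option, hdr]
    rfl
  have hz : ∀ o ∈ (Finset.univ : Finset (Option (Fin N))), zz o ∈ Pset d 1 := by
    rintro (_|k) _
    · exact RME.zero_mem_Pset
    · by_cases htk : t k = 0
      · have : B k = 0 := RME.psd_eq_zero_of_trace (hBpsd k) htk
        show ((if 0 ≤ c k then (1:ℝ) else -1) * (t k)⁻¹) • B k ∈ Pset d 1
        rw [this, smul_zero]
        exact RME.zero_mem_Pset
      · obtain ⟨σ, hσ, hk⟩ := hB k
        show ((if 0 ≤ c k then (1:ℝ) else -1) * (t k)⁻¹) • B k ∈ Pset d 1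
        rw [hk, ← smul_smul]
        refine RME.scaled_kprod_mem_Pset σ hσ _ ?_ (inv_nonneg.mpr (ht0 k)) ?_
        · split <;> simp
        · rw [← hk]
          rw [inv_mul_cancel₀]
          exact htk
  have hcombo : ∑ o, w o • zz o = ρ := by
    rw [Fintype.sum_option]
    have h0 : w none • zz none = 0 := by rw [hdw, hdz]; simp
    rw [h0, zero_add, hsum]
    refine Finset.sum_congr rfl fun k _ => ?_
    show (|c k| * t k) • (((if 0 ≤ c k then (1:ℝ) else -1) * (t k)⁻¹) • B k) = (c k : ℂ) • B k
    rw [smul_smul, ← RME.real_smul_eq]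
    by_cases htk : t k = 0
    · have hBk : B k = 0 := RME.psd_eq_zero_of_trace (hBpsd k) htk
      rw [hBk, smul_zero, smul_zero]
    · have harith : |c k| * t k * ((if 0 ≤ c k then (1:ℝ) else -1) * (t k)⁻¹) = c k := by
        rcases le_or_gt 0 (c k) with h|h
        · rw [if_pos h, abs_of_nonneg h]
          field_simp
        · rw [if_neg (not_le.mpr h), abs_of_neg h]
          field_simp
      rw [harith]
  have hmem := Finset.centerMass_mem_convexHull (Finset.univ : Finset (Option (Fin N)))
    hw0 (by rw [hwsum]; exact hr) hz
  rw [Finset.centerMass, hwsum, hcombo] at hmem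
  exact Set.mem_smul_set.mpr ⟨r⁻¹ • ρ, hmem, by rw [smul_smul, mul_inv_cancel₀ hr.ne', one_smul]⟩

end nonemptysec

/-- For every state `ρ`, `R(ρ) ≤ μ₁(ρ) ≤ 2 R(ρ)`. -/
theorem robustness_le_mu_le_two_robustness {n : ℕ} {d : Fin (n+1) → ℕ}
    (ρ : Matrix (∀ i, Fin (d i)) (∀ i, Fin (d i)) ℂ)
    (hpsd : ρ.PosSemidef) (htr : ρ.trace = 1) :
    robustness ρ ≤ mu d 1 ρ ∧ mu d 1 ρ ≤ 2 * robustness ρ := by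
  set Bh := convexHull ℝ (Pset d 1) with hBh
  set RSet : Set ℝ := {l : ℝ | 1 ≤ l ∧ ∃ ρ₁ ρ₂ : Matrix (∀ i, Fin (d i)) (∀ i, Fin (d i)) ℂ,
    IsSepState ρ₁ ∧ IsSepState ρ₂ ∧ ρ = (1 - l) • ρ₁ + l • ρ₂} with hRSet
  have hrob : robustness ρ = sInf RSet := rfl
  set S : Set ℝ := {r ∈ Set.Ioi (0:ℝ) | ρ ∈ r • Bh} with hS
  have hmu : mu d 1 ρ = sInf S := gauge_def
  have hSne : S.Nonempty := by
    obtain ⟨r, hr0, hrm⟩ := RME.gauge_set_nonempty ρ hpsd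
    exact ⟨r, hr0, hrm⟩
  have hkey : ∀ r ∈ S, ∃ l ∈ RSet, l ≤ r := by
    rintro r ⟨hr0, hrm⟩
    obtain ⟨l, hl, hlr⟩ := RME.key_decomp ρ htr hr0 hrm
    exact ⟨l, hl, hlr⟩
  have hRBdd : BddBelow RSet := ⟨1, fun l hl => hl.1⟩
  have hRne : RSet.Nonempty := by
    obtain ⟨r, hr⟩ := hSne
    obtain ⟨l, hl, _⟩ := hkey r hr
    exact ⟨l, hl⟩
  constructor
  · rw [hrob, hmu]
    refine le_csInf hSne fun r hrS => ?_
    obtain ⟨l, hl, hlr⟩ := hkey r hrS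
    exact (csInf_le hRBdd hl).trans hlr
  · have h2 : ∀ l ∈ RSet, mu d 1 ρ ≤ 2 * l - 1 := by
      rintro l ⟨hl1, ρ₁, ρ₂, hsep1, hsep2, heq⟩
      have hm1 : ρ₂ ∈ Bh := RME.sep_mem_hull hsep2
      have hm2 : -ρ₁ ∈ Bh := RME.neg_mem_hull (RME.sep_mem_hull hsep1)
      have hlpos : (0:ℝ) < 2 * l - 1 := by linarith
      have hconv : Convex ℝ Bh := convex_convexHull ℝ _
      have hcomb : ((2*l-1)⁻¹ * l) • ρ₂ + ((2*l-1)⁻¹ * (l-1)) • (-ρ₁) ∈ Bh := by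
        refine hconv hm1 hm2 ?_ ?_ ?_
        · exact mul_nonneg (inv_nonneg.mpr hlpos.le) (by linarith)
        · exact mul_nonneg (inv_nonneg.mpr hlpos.le) (by linarith)
        · rw [← mul_add]
          field_simp
          ring
      have hmem : ρ ∈ (2*l-1) • Bh := by
        refine Set.mem_smul_set.mpr ⟨_, hcomb, ?_⟩
        rw [smul_add, smul_smul, smul_smul]
        have e1 : (2*l-1) * ((2*l-1)⁻¹ * l) = l := by field_simp
        have e2 : (2*l-1) * ((2*l-1)⁻¹ * (l-1)) = l - 1 := by
          rw [← mul_assoc, mul_inv_cancel₀ hlpos.ne', one_mul]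
        rw [e1, e2, heq]
        module
      exact gauge_le_of_mem hlpos.le hmem
    have h3 : (mu d 1 ρ + 1) / 2 ≤ robustness ρ := by
      rw [hrob]
      refine le_csInf hRne fun l hl => ?_
      have := h2 l hl
      linarith
    linarith
end

section
/- Let 1 ≤ p < ∞ and let ρ ∈ M_{d₀}(ℂ)⊗⋯⊗M_{d_n}(ℂ) ≅ M_{d₀⋯d_n}(ℂ) be positive semidefinite and diagonal in the standard basis. Then μ_{√,p}(ρ) ≤ √(‖ρ‖_{1/2}), where ‖ρ‖_{1/2} = (∑_i s_i(ρ)^{1/2})² is the Schatten 1/2-quasinorm. -/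
open scoped ComplexOrder
open Polynomial

lemma charpoly_conj_aux {m : Type*} [Fintype m] [DecidableEq m]
    (U D V : Matrix m m ℂ) (hUV : U * V = 1) :
    (U * D * V).charpoly = D.charpoly := by
  have hmapUV : (U.map C) * (V.map C) = 1 := by
    rw [← Matrix.map_mul, hUV]; simp
  have key : Matrix.charmatrix (U * D * V) =
      (U.map C) * Matrix.charmatrix D * (V.map C) := by
    have hcomm : ∀ M : Matrix m m ℂ[X],
        M * Matrix.scalar m (X : ℂ[X]) = Matrix.scalar m (X : ℂ[X]) * M := fun M =>
      (Matrix.scalar_commute (X : ℂ[X]) (fun r => Commute.all _ r) M).symm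
    rw [Matrix.charmatrix, Matrix.charmatrix, Matrix.mul_sub, Matrix.sub_mul]
    congr 1
    · rw [mul_assoc, ← hcomm (V.map C), ← mul_assoc, hmapUV, one_mul]
    · simp only [RingHom.mapMatrix_apply, ← Matrix.map_mul]
  rw [Matrix.charpoly, Matrix.charpoly, key, Matrix.det_mul, Matrix.det_mul,
    mul_right_comm, ← Matrix.det_mul, hmapUV, Matrix.det_one, one_mul]

lemma charpoly_diagonal_aux {m : Type*} [Fintype m] [DecidableEq m] (v : m → ℂ) :
    (Matrix.diagonal v).charpoly = ∏ i, (X - C (v i)) := by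
  have : Matrix.charmatrix (Matrix.diagonal v) =
      Matrix.diagonal (fun i => (X : ℂ[X]) - C (v i)) := by
    refine Matrix.ext fun i j => ?_
    by_cases hij : i = j
    · subst hij
      rw [Matrix.charmatrix_apply_eq, Matrix.diagonal_apply_eq v i,
        Matrix.diagonal_apply_eq (fun i => (X : ℂ[X]) - C (v i)) i]
    · rw [Matrix.charmatrix_apply_ne (Matrix.diagonal v) i j hij,
        Matrix.diagonal_apply_ne v hij, map_zero, neg_zero,
        Matrix.diagonal_apply_ne (fun i => (X : ℂ[X]) - C (v i)) hij]
  rw [Matrix.charpoly, this, Matrix.det_diagonal]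

lemma eigenvalues_congr {m : Type*} [Fintype m] [DecidableEq m]
    {A B : Matrix m m ℂ} (h : A = B) (hA : A.IsHermitian) (hB : B.IsHermitian) :
    hA.eigenvalues = hB.eigenvalues := by subst h; rfl

lemma sum_F_eigenvalues_diagonal {m : Type*} [Fintype m] [DecidableEq m] (g : m → ℝ)
    (h : (Matrix.diagonal (fun x => (g x : ℂ))).IsHermitian) (F : ℝ → ℝ) :
    ∑ i, F (h.eigenvalues i) = ∑ x, F (g x) := by
  have h1 : (Matrix.diagonal (fun x => (g x : ℂ))).charpoly
      = ∏ x, (X - C ((g x : ℂ))) := charpoly_diagonal_aux _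
  have h2 : (Matrix.diagonal (fun x => (g x : ℂ))).charpoly
      = ∏ i, (X - C ((h.eigenvalues i : ℂ))) := by
    conv_lhs => rw [h.spectral_theorem]
    rw [Unitary.conjStarAlgAut_apply]
    rw [charpoly_conj_aux _ _ _
      ((Matrix.mem_unitaryGroup_iff).mp (Matrix.IsHermitian.eigenvectorUnitary h).2)]
    rw [charpoly_diagonal_aux]
    rfl
  have hroots : (Finset.univ.val.map fun i => ((h.eigenvalues i : ℝ) : ℂ))
      = Finset.univ.val.map (fun x => ((g x : ℝ) : ℂ)) := by
    have r1 := Polynomial.roots_multiset_prod_X_sub_C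
      (Finset.univ.val.map fun i => ((h.eigenvalues i : ℝ) : ℂ))
    have r2 := Polynomial.roots_multiset_prod_X_sub_C
      (Finset.univ.val.map fun x => ((g x : ℝ) : ℂ))
    rw [Multiset.map_map] at r1 r2
    have e1 : ((Finset.univ.val.map fun i => (X - C ((h.eigenvalues i : ℝ) : ℂ)))).prod
        = ∏ i, (X - C ((h.eigenvalues i : ℂ))) := rfl
    have e2 : ((Finset.univ.val.map fun x => (X - C ((g x : ℝ) : ℂ)))).prod
        = ∏ x, (X - C ((g x : ℂ))) := rfl
    rw [Function.comp_def] at r1 r2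
    rw [e1, ← h2, h1, ← e2, r2] at r1
    exact r1.symm
  have := congrArg (fun M : Multiset ℂ => (M.map (fun z => F z.re)).sum) hroots
  simp only [Multiset.map_map, Function.comp_def, Complex.ofReal_re] at this
  rw [show (∑ i, F (h.eigenvalues i)) = (Finset.univ.val.map fun i => F (h.eigenvalues i)).sum from rfl,
    show (∑ x, F (g x)) = (Finset.univ.val.map fun x => F (g x)).sum from rfl]
  exact this

lemma schattenNorm_diagonal_aux {m : Type*} [Fintype m] [DecidableEq m]
    (A : Matrix m m ℂ) (f : m → ℝ) (hf : ∀ x, 0 ≤ f x)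
    (hA : A = Matrix.diagonal (fun x => (f x : ℂ))) (q : ℝ) :
    (∑ i, Real.sqrt ((Matrix.isHermitian_conjTranspose_mul_self A).eigenvalues i) ^ q)
      = ∑ x, f x ^ q := by
  have hAA : A.conjTranspose * A = Matrix.diagonal (fun x => ((f x * f x : ℝ) : ℂ)) := by
    subst hA
    rw [Matrix.diagonal_conjTranspose, Matrix.diagonal_mul_diagonal]
    funext x
    simp [Pi.star_apply, Complex.star_def, Complex.conj_ofReal]
  have hB : (Matrix.diagonal (fun x => ((f x * f x : ℝ) : ℂ))).IsHermitian :=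
    hAA ▸ Matrix.isHermitian_conjTranspose_mul_self A
  have hcongr := eigenvalues_congr hAA (Matrix.isHermitian_conjTranspose_mul_self A) hB
  have key := sum_F_eigenvalues_diagonal (fun x => f x * f x) hB (fun t => Real.sqrt t ^ q)
  beta_reduce at key
  rw [hcongr, key]
  exact Finset.sum_congr rfl fun x _ => by rw [Real.sqrt_mul_self (hf x)]

/-- `μ_{√,p}(ρ) = inf{μ_p(σ) : σ Hermitian, σ² = ρ}`. -/
noncomputable def muSqrt {n : ℕ} (d : Fin (n+1) → ℕ) (p : ℝ)
    (ρ : Matrix (∀ i, Fin (d i)) (∀ i, Fin (d i)) ℂ) : ℝ :=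
  sInf {r : ℝ | ∃ σ : Matrix (∀ i, Fin (d i)) (∀ i, Fin (d i)) ℂ,
    σ.IsHermitian ∧ σ * σ = ρ ∧ r = mu d p σ}

lemma schattenNorm_diag {m : Type*} [Fintype m] [DecidableEq m]
    (A : Matrix m m ℂ) (f : m → ℝ) (hf : ∀ x, 0 ≤ f x)
    (hA : A = Matrix.diagonal (fun x => (f x : ℂ))) (q : ℝ) :
    schattenNorm q A = (∑ x, f x ^ q) ^ (1/q) := by
  unfold schattenNorm singVals
  rw [schattenNorm_diagonal_aux A f hf hA q]

lemma proj_mem_Pset {n : ℕ} {d : Fin (n+1) → ℕ} (p : ℝ) (hp : 1 ≤ p) (x : ∀ i, Fin (d i)) :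
    Matrix.diagonal (fun a => if a = x then (1:ℂ) else 0) ∈ Pset d p := by
  have hk : kprod (fun i => Matrix.diagonal fun j => if j = x i then (1:ℂ) else 0)
      = Matrix.diagonal (fun a => if a = x then (1:ℂ) else 0) := by
    refine Matrix.ext fun a b => ?_
    show (∏ i, Matrix.diagonal (fun j => if j = x i then (1:ℂ) else 0) (a i) (b i)) = _
    by_cases hab : a = b
    · subst hab
      by_cases hax : a = x
      · subst hax
        simp
      · obtain ⟨i, hi⟩ := Function.ne_iff.mp hax
        rw [Matrix.diagonal_apply_eq, if_neg hax]
        refine Finset.prod_eq_zero (Finset.mem_univ i) ?_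
        rw [Matrix.diagonal_apply_eq, if_neg hi]
    · obtain ⟨i, hi⟩ := Function.ne_iff.mp hab
      rw [Matrix.diagonal_apply_ne _ hab]
      refine Finset.prod_eq_zero (Finset.mem_univ i) ?_
      rw [Matrix.diagonal_apply_ne _ hi]
  refine ⟨1, fun i => Matrix.diagonal (fun j => if j = x i then (1:ℂ) else 0),
    Or.inl rfl, ?_, ?_, by rw [hk, one_smul]⟩
  · intro i
    refine Matrix.posSemidef_diagonal_iff.mpr fun j => ?_
    split
    · exact zero_le_one
    · exact le_refl 0
  · have hfun : (fun a => ((if a = x then (1:ℝ) else 0 : ℝ) : ℂ))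
        = fun a => if a = x then (1:ℂ) else 0 := by
      funext a; split <;> simp
    rw [hk, schattenNorm_diag _ (fun a => if a = x then (1:ℝ) else 0)
      (fun a => by split <;> norm_num)
      (congrArg Matrix.diagonal hfun).symm p]
    have h1 : ∀ a, (if a = x then (1:ℝ) else 0) ^ p = if a = x then (1:ℝ) else 0 := by
      intro a; split
      · exact Real.one_rpow p
      · exact Real.zero_rpow (by linarith)
    simp only [h1, Finset.sum_ite_eq' Finset.univ x (fun _ => (1:ℝ)), Finset.mem_univ, if_pos]
    rw [Real.one_rpow]

/-- For `1 ≤ p < ∞` and a psd matrix `ρ` diagonal in the standard basis,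
`μ_{√,p}(ρ) ≤ √(‖ρ‖_{1/2})`. -/
theorem muSqrt_le_sqrt_quasinorm_of_diagonal {n : ℕ} {d : Fin (n+1) → ℕ}
    (p : ℝ) (hp : 1 ≤ p)
    (ρ : Matrix (∀ i, Fin (d i)) (∀ i, Fin (d i)) ℂ) (hρ : ρ.PosSemidef)
    (hdiag : ∀ x y, x ≠ y → ρ x y = 0) :
    muSqrt d p ρ ≤ Real.sqrt (schattenNorm (1 / 2) ρ) := by
  classical
  set f : (∀ i, Fin (d i)) → ℝ := fun x => (ρ x x).re with hf_def
  have hfx : ∀ x, 0 ≤ f x ∧ ρ x x = ((f x : ℝ) : ℂ) := by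
    intro x
    have h0 : 0 ≤ ρ x x := by
      exact hρ.diag_nonneg
    obtain ⟨hre, him⟩ := Complex.nonneg_iff.mp h0
    exact ⟨hre, Complex.ext rfl him.symm⟩
  have hρ_eq : ρ = Matrix.diagonal (fun x => ((f x : ℝ) : ℂ)) := by
    refine Matrix.ext fun a b => ?_
    by_cases hab : a = b
    · subst hab
      rw [Matrix.diagonal_apply_eq]
      exact (hfx a).2
    · rw [Matrix.diagonal_apply_ne _ hab]
      exact hdiag a b hab
  set σ : Matrix (∀ i, Fin (d i)) (∀ i, Fin (d i)) ℂ :=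
    Matrix.diagonal (fun x => ((Real.sqrt (f x) : ℝ) : ℂ)) with hσ_def
  have hσH : σ.IsHermitian := by
    refine Matrix.isHermitian_diagonal_of_self_adjoint _ (funext fun x => ?_)
    simp [Complex.star_def, Complex.conj_ofReal]
  have hσ2 : σ * σ = ρ := by
    rw [hσ_def, Matrix.diagonal_mul_diagonal, hρ_eq]
    have : (fun x => ((Real.sqrt (f x) : ℝ) : ℂ) * ((Real.sqrt (f x) : ℝ) : ℂ))
        = fun x => ((f x : ℝ) : ℂ) := by
      funext x
      rw [← Complex.ofReal_mul, Real.mul_self_sqrt (hfx x).1]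
    rw [this]
  set S : ℝ := ∑ x, Real.sqrt (f x) with hS_def
  have hS0 : 0 ≤ S := Finset.sum_nonneg fun x _ => Real.sqrt_nonneg _
  -- RHS = S
  have hRHS : Real.sqrt (schattenNorm (1/2) ρ) = S := by
    rw [schattenNorm_diag ρ f (fun x => (hfx x).1) hρ_eq (1/2)]
    have h1 : ∀ x, f x ^ ((1:ℝ)/2) = Real.sqrt (f x) := fun x =>
      (Real.sqrt_eq_rpow (f x)).symm
    simp only [h1]
    rw [show ((1:ℝ)/(1/2)) = (2:ℝ) by norm_num, show (2:ℝ) = ((2:ℕ):ℝ) by norm_num,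
      Real.rpow_natCast]
    rw [Real.sqrt_sq hS0]
  -- gauge bound
  have hmu : mu d p σ ≤ S := by
    rcases eq_or_lt_of_le hS0 with hS | hS
    · have hz : ∀ x, Real.sqrt (f x) = 0 := fun x =>
        (Finset.sum_eq_zero_iff_of_nonneg (fun x _ => Real.sqrt_nonneg (f x))).mp hS.symm x
          (Finset.mem_univ x)
      have : σ = 0 := by
        rw [hσ_def]
        refine Matrix.ext fun a b => ?_
        by_cases hab : a = b
        · subst hab; simp [hz a]
        · simp [Matrix.diagonal_apply_ne _ hab]
      rw [this]
      unfold mu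
      rw [gauge_zero]
      exact hS0
    · set z : (∀ i, Fin (d i)) → Matrix (∀ i, Fin (d i)) (∀ i, Fin (d i)) ℂ :=
        fun x => Matrix.diagonal (fun a => if a = x then (1:ℂ) else 0) with hz_def
      have hσsum : σ = ∑ x, Real.sqrt (f x) • z x := by
        refine Matrix.ext fun a b => ?_
        rw [Matrix.sum_apply]
        simp only [hz_def, Matrix.smul_apply, Matrix.diagonal_apply, smul_ite,
          Complex.real_smul, mul_one, mul_zero, smul_zero]
        by_cases hab : a = b
        · subst hab
          simp [hσ_def, Matrix.diagonal_apply_eq]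
        · simp [hσ_def, hab, Matrix.diagonal_apply_ne _ hab]
      have hcm := Finset.centerMass_mem_convexHull (R := ℝ) Finset.univ
        (w := fun x => Real.sqrt (f x)) (z := z)
        (fun x _ => Real.sqrt_nonneg (f x)) (by rw [← hS_def]; exact hS)
        (fun x _ => proj_mem_Pset p hp x)
      have hcm' : Finset.univ.centerMass (fun x => Real.sqrt (f x)) z = S⁻¹ • σ := by
        rw [Finset.centerMass, ← hS_def, hσsum]
      unfold mu
      refine gauge_le_of_mem hS0 ?_
      rw [Set.mem_smul_set]
      exact ⟨S⁻¹ • σ, hcm' ▸ hcm, by rw [smul_inv_smul₀ (ne_of_gt hS)]⟩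
  have hbdd : BddBelow {r : ℝ | ∃ τ : Matrix (∀ i, Fin (d i)) (∀ i, Fin (d i)) ℂ,
      τ.IsHermitian ∧ τ * τ = ρ ∧ r = mu d p τ} := by
    refine ⟨0, fun r hr => ?_⟩
    obtain ⟨τ, _, _, hr⟩ := hr
    rw [hr]
    exact gauge_nonneg τ
  calc muSqrt d p ρ ≤ mu d p σ := csInf_le hbdd ⟨σ, hσH, hσ2, rfl⟩
    _ ≤ S := hmu
    _ = Real.sqrt (schattenNorm (1/2) ρ) := hRHS.symm
end
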